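/- arXiv:2511.22183 — 11 statements merged into one kernel-verified Lean document; each statement's English description precedes it below -/
import Mathlib

section
/- Let F be a field, let r, N ≥ 1, and let A_{i,j} ∈ M_N(F) for i, j ∈ [r] be N×N matrices that pairwise commute (A_{i,j} A_{k,l} = A_{k,l} A_{i,j} for all i, j, k, l ∈ [r]). Then the determinant of the rN×rN block matrix M = (A_{i,j})_{1≤i,j≤r} equals det( Σ_{π ∈ Sym_r} sgn(π) · A_{1,π(1)} A_{2,π(2)} ⋯ A_{r,π(r)} ), where Sym_r is the group of permutations of [r] and sgn(π) is the sign of π. -/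
open Matrix Polynomial

namespace GSF

private lemma natAdd_fin1 (r : ℕ) (j : Fin 1) : Fin.natAdd r j = Fin.last r := by
  ext; simp [Fin.fin_one_eq_zero j]

/-- the sum equivalence used to chop off the last block row/column -/
private def gE (r N : ℕ) : (Fin r × Fin N) ⊕ (Fin 1 × Fin N) ≃ Fin (r+1) × Fin N :=
  (Equiv.sumProdDistrib (Fin r) (Fin 1) (Fin N)).symm.trans
    (Equiv.prodCongr finSumFinEquiv (Equiv.refl (Fin N)))

private lemma gE_inl {r N : ℕ} (i : Fin r) (s : Fin N) :
    gE r N (Sum.inl (i, s)) = (i.castSucc, s) := rfl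

private lemma gE_inr {r N : ℕ} (j : Fin 1) (u : Fin N) :
    gE r N (Sum.inr (j, u)) = (Fin.last r, u) := by
  show (finSumFinEquiv (Sum.inr j), u) = _
  rw [finSumFinEquiv_apply_right, natAdd_fin1]

variable {r N : ℕ} {R S : Type*} [CommRing R] [CommRing S]

private lemma comp_map_mul (n : ℕ) (f : R →+* Matrix (Fin N) (Fin N) S)
    (X Y : Matrix (Fin n) (Fin n) R) :
    (Matrix.of fun p q : Fin n × Fin N => f ((X * Y) p.1 q.1) p.2 q.2)
      = (Matrix.of fun p q : Fin n × Fin N => f (X p.1 q.1) p.2 q.2)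
        * (Matrix.of fun p q : Fin n × Fin N => f (Y p.1 q.1) p.2 q.2) := by
  have key : ∀ Z : Matrix (Fin n) (Fin n) R,
      (Matrix.of fun p q : Fin n × Fin N => f (Z p.1 q.1) p.2 q.2)
        = (Matrix.compRingEquiv (Fin n) (Fin N) S) (Z.map f) := fun _ => rfl
  rw [key, key, key, Matrix.map_mul, _root_.map_mul]

private lemma factor (M : Matrix (Fin (r+1)) (Fin (r+1)) R) :
    (1 - Matrix.of fun i k => if k = Fin.last r
        then (if i = Fin.last r then 0 else M i (Fin.last r)) else 0)
      * ((Matrix.diagonal fun i => if i = Fin.last r then 1 else M (Fin.last r) (Fin.last r))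
          * M)
      = (Matrix.of fun i j =>
          if i = Fin.last r then M (Fin.last r) j
          else M (Fin.last r) (Fin.last r) * M i j - M i (Fin.last r) * M (Fin.last r) j) := by
  set D1 : Matrix (Fin (r+1)) (Fin (r+1)) R :=
    Matrix.diagonal fun i => if i = Fin.last r then 1 else M (Fin.last r) (Fin.last r) with hD1
  ext i j
  have h1 : ∀ i j, (D1 * M) i j
      = (if i = Fin.last r then 1 else M (Fin.last r) (Fin.last r)) * M i j := by
    intro i j; simp [hD1, Matrix.diagonal_mul]
  have h2 : ((Matrix.of fun i k =>
      if k = Fin.last r then (if i = Fin.last r then 0 else M i (Fin.last r)) else 0)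
        * (D1 * M)) i j
      = (if i = Fin.last r then 0 else M i (Fin.last r)) * (D1 * M) (Fin.last r) j := by
    simp [Matrix.mul_apply, ite_mul, Finset.sum_ite_eq']
  rw [Matrix.sub_mul, Matrix.one_mul, Matrix.sub_apply, h2, h1, h1]
  by_cases hi : i = Fin.last r <;> simp [hi]

private lemma det_D1 (M : Matrix (Fin (r+1)) (Fin (r+1)) R) :
    (Matrix.diagonal fun i =>
      if i = Fin.last r then 1 else M (Fin.last r) (Fin.last r)).det
      = M (Fin.last r) (Fin.last r) ^ r := by
  rw [Matrix.det_diagonal, Fin.prod_univ_castSucc]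
  simp [(Fin.castSucc_lt_last _).ne, Finset.prod_const]

private lemma det_E2 (M : Matrix (Fin (r+1)) (Fin (r+1)) R) :
    (1 - Matrix.of fun i k =>
      if k = Fin.last r then (if i = Fin.last r then 0 else M i (Fin.last r)) else 0
      : Matrix (Fin (r+1)) (Fin (r+1)) R).det = 1 := by
  have hbt : Matrix.BlockTriangular (1 - Matrix.of fun i k =>
      if k = Fin.last r then (if i = Fin.last r then 0 else M i (Fin.last r)) else 0
      : Matrix (Fin (r+1)) (Fin (r+1)) R) id := by
    intro i j hij
    have h1 : j ≠ i := ne_of_lt hij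
    have h2 : j ≠ Fin.last r := by
      have := lt_of_lt_of_le hij (Fin.le_last i)
      exact ne_of_lt this
    simp [Matrix.one_apply, h2, Ne.symm h1]
  rw [Matrix.det_of_upperTriangular hbt]
  apply Finset.prod_eq_one
  intro i _
  by_cases hi : i = Fin.last r <;> simp [Matrix.one_apply, hi]

private lemma det_Tm (M : Matrix (Fin (r+1)) (Fin (r+1)) R) :
    (Matrix.of fun i j =>
      if i = Fin.last r then M (Fin.last r) j
      else M (Fin.last r) (Fin.last r) * M i j - M i (Fin.last r) * M (Fin.last r) j
      : Matrix (Fin (r+1)) (Fin (r+1)) R).det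
    = (Matrix.of fun i j : Fin r =>
        M (Fin.last r) (Fin.last r) * M i.castSucc j.castSucc
          - M i.castSucc (Fin.last r) * M (Fin.last r) j.castSucc).det
      * M (Fin.last r) (Fin.last r) := by
  rw [← Matrix.det_submatrix_equiv_self (finSumFinEquiv (m := r) (n := 1))]
  have hsub : (Matrix.of fun i j =>
      if i = Fin.last r then M (Fin.last r) j
      else M (Fin.last r) (Fin.last r) * M i j - M i (Fin.last r) * M (Fin.last r) j
      : Matrix (Fin (r+1)) (Fin (r+1)) R).submatrix finSumFinEquiv finSumFinEquiv
      = Matrix.fromBlocks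
        (Matrix.of fun i j : Fin r =>
          M (Fin.last r) (Fin.last r) * M i.castSucc j.castSucc
            - M i.castSucc (Fin.last r) * M (Fin.last r) j.castSucc)
        0
        (Matrix.of fun (_ : Fin 1) (j : Fin r) => M (Fin.last r) j.castSucc)
        (Matrix.of fun (_ _ : Fin 1) => M (Fin.last r) (Fin.last r)) := by
    have hcs : ∀ i : Fin r, Fin.castAdd 1 i = i.castSucc := fun _ => rfl
    ext i j
    rcases i with i | i <;> rcases j with j | j <;>
      simp [hcs, natAdd_fin1, (Fin.castSucc_lt_last _).ne]
    · ring
  rw [hsub, Matrix.det_fromBlocks_zero₁₂]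
  congr 1
  simp [Matrix.det_fin_one]

private lemma det_comp_D1 (f : R →+* Matrix (Fin N) (Fin N) S) (a : R) :
    (Matrix.of fun p q : Fin (r+1) × Fin N =>
      f ((Matrix.diagonal fun i => if i = Fin.last r then 1 else a) p.1 q.1) p.2 q.2).det
      = (f a).det ^ r := by
  have h : (Matrix.of fun p q : Fin (r+1) × Fin N =>
      f ((Matrix.diagonal fun i => if i = Fin.last r then 1 else a) p.1 q.1) p.2 q.2)
      = Matrix.submatrix
          (Matrix.blockDiagonal fun i : Fin (r+1) => f (if i = Fin.last r then 1 else a))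
          (Equiv.prodComm (Fin (r+1)) (Fin N)) (Equiv.prodComm (Fin (r+1)) (Fin N)) := by
    ext ⟨i, s⟩ ⟨j, u⟩
    by_cases hij : i = j <;>
      simp [Matrix.diagonal_apply, hij, Matrix.blockDiagonal_apply]
  rw [h, Matrix.det_submatrix_equiv_self, Matrix.det_blockDiagonal, Fin.prod_univ_castSucc]
  simp [(Fin.castSucc_lt_last _).ne]

private lemma det_comp_E2 (f : R →+* Matrix (Fin N) (Fin N) S)
    (M : Matrix (Fin (r+1)) (Fin (r+1)) R) :
    (Matrix.of fun p q : Fin (r+1) × Fin N =>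
      f ((1 - Matrix.of fun i k => if k = Fin.last r
            then (if i = Fin.last r then 0 else M i (Fin.last r)) else 0
          : Matrix (Fin (r+1)) (Fin (r+1)) R) p.1 q.1) p.2 q.2).det = 1 := by
  rw [← Matrix.det_submatrix_equiv_self (gE r N)]
  have h : Matrix.submatrix
      (Matrix.of fun p q : Fin (r+1) × Fin N =>
        f ((1 - Matrix.of fun i k => if k = Fin.last r
              then (if i = Fin.last r then 0 else M i (Fin.last r)) else 0
            : Matrix (Fin (r+1)) (Fin (r+1)) R) p.1 q.1) p.2 q.2)
      (gE r N) (gE r N)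
      = Matrix.fromBlocks 1
          (Matrix.of fun (p : Fin r × Fin N) (q : Fin 1 × Fin N) =>
            f (- M p.1.castSucc (Fin.last r)) p.2 q.2)
          0 1 := by
    ext p q
    rcases p with ⟨i, s⟩ | ⟨i, s⟩ <;> rcases q with ⟨j, u⟩ | ⟨j, u⟩ <;>
        simp only [Matrix.submatrix_apply, gE_inl, gE_inr, Matrix.of_apply,
          Matrix.sub_apply, Matrix.one_apply, Matrix.fromBlocks_apply₁₁,
          Matrix.fromBlocks_apply₁₂, Matrix.fromBlocks_apply₂₁, Matrix.fromBlocks_apply₂₂]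
    · by_cases hij : i = j
      · subst hij
        simp [(Fin.castSucc_lt_last i).ne, Matrix.one_apply, Prod.ext_iff]
      · have : i.castSucc ≠ j.castSucc := fun h => hij (Fin.castSucc_injective _ h)
        simp [this, (Fin.castSucc_lt_last j).ne, Matrix.one_apply, Prod.ext_iff, hij]
    · simp [(Fin.castSucc_lt_last i).ne, map_neg, map_sub]
    · simp [(Fin.castSucc_lt_last j).ne.symm, Ne.symm (Fin.castSucc_lt_last j).ne]
    · simp [Subsingleton.elim i j, Matrix.one_apply, Prod.ext_iff]
  rw [h, Matrix.det_fromBlocks_zero₂₁]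
  simp

private lemma det_comp_Tm (f : R →+* Matrix (Fin N) (Fin N) S)
    (M : Matrix (Fin (r+1)) (Fin (r+1)) R) :
    (Matrix.of fun p q : Fin (r+1) × Fin N =>
      f ((Matrix.of fun i j =>
          if i = Fin.last r then M (Fin.last r) j
          else M (Fin.last r) (Fin.last r) * M i j - M i (Fin.last r) * M (Fin.last r) j
          : Matrix (Fin (r+1)) (Fin (r+1)) R) p.1 q.1) p.2 q.2).det
      = (Matrix.of fun p q : Fin r × Fin N =>
          f ((Matrix.of fun i j : Fin r =>
              M (Fin.last r) (Fin.last r) * M i.castSucc j.castSucc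
                - M i.castSucc (Fin.last r) * M (Fin.last r) j.castSucc) p.1 q.1) p.2 q.2).det
        * (f (M (Fin.last r) (Fin.last r))).det := by
  rw [← Matrix.det_submatrix_equiv_self (gE r N)]
  have h : Matrix.submatrix
      (Matrix.of fun p q : Fin (r+1) × Fin N =>
        f ((Matrix.of fun i j =>
            if i = Fin.last r then M (Fin.last r) j
            else M (Fin.last r) (Fin.last r) * M i j - M i (Fin.last r) * M (Fin.last r) j
            : Matrix (Fin (r+1)) (Fin (r+1)) R) p.1 q.1) p.2 q.2)
      (gE r N) (gE r N)
      = Matrix.fromBlocks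
          (Matrix.of fun p q : Fin r × Fin N =>
            f ((Matrix.of fun i j : Fin r =>
                M (Fin.last r) (Fin.last r) * M i.castSucc j.castSucc
                  - M i.castSucc (Fin.last r) * M (Fin.last r) j.castSucc) p.1 q.1) p.2 q.2)
          0
          (Matrix.of fun (p : Fin 1 × Fin N) (q : Fin r × Fin N) =>
            f (M (Fin.last r) q.1.castSucc) p.2 q.2)
          (Matrix.submatrix (f (M (Fin.last r) (Fin.last r)))
            (Equiv.uniqueProd (Fin N) (Fin 1)) (Equiv.uniqueProd (Fin N) (Fin 1))) := by
    ext p q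
    rcases p with ⟨i, s⟩ | ⟨i, s⟩ <;> rcases q with ⟨j, u⟩ | ⟨j, u⟩ <;>
        simp only [Matrix.submatrix_apply, gE_inl, gE_inr, Matrix.of_apply,
          Matrix.fromBlocks_apply₁₁, Matrix.fromBlocks_apply₁₂, Matrix.fromBlocks_apply₂₁,
          Matrix.fromBlocks_apply₂₂, Equiv.uniqueProd_apply]
    · simp [(Fin.castSucc_lt_last i).ne]
    · have : M (Fin.last r) (Fin.last r) * M i.castSucc (Fin.last r)
          - M i.castSucc (Fin.last r) * M (Fin.last r) (Fin.last r) = 0 := by ring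
      simp [(Fin.castSucc_lt_last i).ne, this]
    · simp
    · simp
  rw [h, Matrix.det_fromBlocks_zero₁₂, Matrix.det_submatrix_equiv_self]

end GSF
namespace GSF

variable {N : ℕ}

private theorem block_det_aux (N : ℕ) :
    ∀ (r : ℕ) {R S : Type*} [CommRing R] [CommRing S]
      (f : R →+* Matrix (Fin N) (Fin N) S) (M : Matrix (Fin r) (Fin r) R),
      (Matrix.of fun p q : Fin r × Fin N => f (M p.1 q.1) p.2 q.2).det = (f M.det).det := by
  intro r
  induction r with
  | zero =>
    intro R S _ _ f M
    rw [Matrix.det_isEmpty, Matrix.det_isEmpty (n := Fin 0), _root_.map_one, Matrix.det_one]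
  | succ r IH =>
    intro R S _ _ f M₀
    classical
    -- pass to polynomial rings
    set f' : R[X] →+* Matrix (Fin N) (Fin N) S[X] :=
      ((matPolyEquiv (R := S) (n := Fin N)).symm.toRingEquiv.toRingHom).comp
        (Polynomial.mapRingHom f) with hf'
    have hf'C : ∀ x : R, f' (C x) = (f x).map C := by
      intro x
      simp only [hf', RingHom.comp_apply, Polynomial.coe_mapRingHom, Polynomial.map_C]
      exact matPolyEquiv_symm_C (f x)
    have hf'X : f' (X : R[X]) = Matrix.diagonal fun _ => (X : S[X]) := by
      simp only [hf', RingHom.comp_apply, Polynomial.coe_mapRingHom, Polynomial.map_X]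
      exact matPolyEquiv_symm_X
    set M' : Matrix (Fin (r+1)) (Fin (r+1)) R[X] :=
      M₀.map C + Matrix.diagonal fun _ => (X : R[X]) with hM'
    have hM'app : ∀ i j, M' i j = C (M₀ i j) + if i = j then (X : R[X]) else 0 := by
      intro i j
      by_cases hij : i = j <;> simp [hM', Matrix.diagonal_apply, hij]
    -- the corner block has regular determinant
    have hreg : IsRegular ((f' (M' (Fin.last r) (Fin.last r))).det) := by
      have hfa : f' (M' (Fin.last r) (Fin.last r)) = charmatrix (-(f (M₀ (Fin.last r) (Fin.last r)))) := by
        have ha : M' (Fin.last r) (Fin.last r) = C (M₀ (Fin.last r) (Fin.last r)) + X := by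
          simpa using hM'app (Fin.last r) (Fin.last r)
        rw [ha, map_add, hf'C, hf'X, charmatrix, map_neg]
        ext s u
        by_cases hsu : s = u <;>
          simp [Matrix.diagonal_apply, hsu, Matrix.scalar_apply, add_comm, sub_neg_eq_add,
            Matrix.map_apply]
      rw [hfa]
      exact (Matrix.charpoly_monic (-(f (M₀ (Fin.last r) (Fin.last r))))).isRegular
    -- the factorization and scalar determinant identity
    have hfac := factor (R := R[X]) M'
    have hscal : (Matrix.of fun i j : Fin r =>
        M' (Fin.last r) (Fin.last r) * M' i.castSucc j.castSucc
          - M' i.castSucc (Fin.last r) * M' (Fin.last r) j.castSucc).det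
          * M' (Fin.last r) (Fin.last r)
        = M' (Fin.last r) (Fin.last r) ^ r * M'.det := by
      have h := congrArg Matrix.det hfac
      rw [Matrix.det_mul, Matrix.det_mul, det_E2 M', det_D1 M', det_Tm M', one_mul] at h
      exact h.symm
    -- the block determinant identity
    have hfacP := congrArg
      (fun Z : Matrix (Fin (r+1)) (Fin (r+1)) R[X] =>
        (Matrix.of fun p q : Fin (r+1) × Fin N => f' (Z p.1 q.1) p.2 q.2)) hfac
    simp only [comp_map_mul] at hfacP
    have hblock := congrArg Matrix.det hfacP
    rw [Matrix.det_mul, Matrix.det_mul, det_comp_E2 f' M', det_comp_D1 f',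
      det_comp_Tm f' M', one_mul] at hblock
    -- plug in the induction hypothesis and the mapped scalar identity
    rw [IH f'] at hblock
    have hscal' := congrArg (fun x : R[X] => (f' x).det) hscal
    simp only [_root_.map_mul, _root_.map_pow, Matrix.det_mul, Matrix.det_pow] at hscal'
    rw [hscal'] at hblock
    -- cancel the regular factor
    have hkey : (Matrix.of fun p q : Fin (r+1) × Fin N =>
        f' (M' p.1 q.1) p.2 q.2).det = (f' M'.det).det := by
      have := ((hreg.pow r).left) hblock
      exact this
    -- evaluate the polynomial variable at 0
    have hev : RingHom.comp (RingHom.mapMatrix (Polynomial.evalRingHom (0 : S))) f'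
        = RingHom.comp f (Polynomial.evalRingHom (0 : R)) := by
      apply Polynomial.ringHom_ext
      · intro x
        ext s u
        simp [hf'C, Matrix.map_apply]
      · ext s u
        by_cases hsu : s = u <;>
          simp [hf'X, Matrix.diagonal_apply, hsu, Matrix.map_apply]
    have hev' : ∀ x : R[X],
        (f' x).map (Polynomial.evalRingHom (0 : S)) = f (Polynomial.eval 0 x) := by
      intro x
      have h := DFunLike.congr_fun hev x
      simpa [RingHom.mapMatrix_apply] using h
    have hM'ev : M'.map (Polynomial.eval 0) = M₀ := by
      ext i j
      by_cases hij : i = j <;> simp [hM', Matrix.diagonal_apply, hij, Matrix.map_apply]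
    have hfin := congrArg (Polynomial.evalRingHom (0 : S)) hkey
    rw [RingHom.map_det, RingHom.map_det] at hfin
    have h1 : (Matrix.of fun p q : Fin (r+1) × Fin N =>
        f' (M' p.1 q.1) p.2 q.2).map (Polynomial.evalRingHom (0 : S))
        = Matrix.of fun p q : Fin (r+1) × Fin N => f (M₀ p.1 q.1) p.2 q.2 := by
      ext p q
      simp only [Matrix.map_apply, Matrix.of_apply]
      have h2 : ((f' (M' p.1 q.1)).map (Polynomial.evalRingHom (0 : S))) p.2 q.2
          = (f (Polynomial.eval 0 (M' p.1 q.1))) p.2 q.2 := by rw [hev']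
      simp only [Matrix.map_apply] at h2
      rw [h2]
      have h4 : (M'.map (Polynomial.eval 0)) p.1 q.1 = M₀ p.1 q.1 := by rw [hM'ev]
      have h5 : Polynomial.eval 0 (M' p.1 q.1) = M₀ p.1 q.1 := by
        simpa [Matrix.map_apply] using h4
      rw [h5]
    have h3 : (f' M'.det).map (Polynomial.evalRingHom (0 : S)) = f M₀.det := by
      rw [hev' M'.det]
      have h6 : Polynomial.eval 0 M'.det = M₀.det := by
        have hdet := RingHom.map_det (Polynomial.evalRingHom (0 : R)) M'
        simp only [RingHom.mapMatrix_apply, Polynomial.coe_evalRingHom] at hdet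
        rw [hM'ev] at hdet
        simpa using hdet
      rw [h6]
    simp only [RingHom.mapMatrix_apply] at hfin
    rw [h1, h3] at hfin
    exact hfin

end GSF

/-- **Generalized Schur's formula** (Kovács, Silvester).  Let `F` be a field and let
`A i j` (`i, j ∈ [r]`) be `N × N` matrices over `F` that pairwise commute.  Then the
determinant of the `rN × rN` block matrix `M = (A i j)` equals the determinant of the
`N × N` matrix `∑ π ∈ Sym r, sgn π • (A 1 (π 1)) ⋯ (A r (π r))`. -/
theorem generalized_schur_formula
    (F : Type*) [Field F] (r N : ℕ) (hr : 1 ≤ r) (hN : 1 ≤ N)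
    (A : Fin r → Fin r → Matrix (Fin N) (Fin N) F)
    (hcomm : ∀ i j k l : Fin r, A i j * A k l = A k l * A i j) :
    (Matrix.of fun p s : Fin r × Fin N => A p.1 s.1 p.2 s.2).det
      = (∑ π : Equiv.Perm (Fin r),
          (Equiv.Perm.sign π : ℤ) • (List.ofFn fun i : Fin r => A i (π i)).prod).det := by
  classical
  set sR : Set (Matrix (Fin N) (Fin N) F) :=
    Set.range (fun p : Fin r × Fin r => A p.1 p.2) with hsR
  have hcomm' : ∀ a ∈ sR, ∀ b ∈ sR, a * b = b * a := by
    rintro _ ⟨⟨i, j⟩, rfl⟩ _ ⟨⟨k, l⟩, rfl⟩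
    exact hcomm i j k l
  letI : CommRing (Subring.closure sR) := Subring.closureCommRingOfComm hcomm'
  set M : Matrix (Fin r) (Fin r) (Subring.closure sR) :=
    Matrix.of fun i j =>
      (⟨A i j, Subring.subset_closure ⟨(i, j), rfl⟩⟩ : Subring.closure sR) with hM
  have key := GSF.block_det_aux N r (Subring.closure sR).subtype M
  have hL : (Matrix.of fun p q : Fin r × Fin N =>
      (Subring.closure sR).subtype (M p.1 q.1) p.2 q.2)
      = Matrix.of fun p s : Fin r × Fin N => A p.1 s.1 p.2 s.2 := rfl
  rw [hL] at key
  rw [key]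
  congr 1
  rw [← Matrix.det_transpose M, Matrix.det_apply]
  simp only [Matrix.transpose_apply, map_sum]
  refine Finset.sum_congr rfl fun σ _ => ?_
  have h1 : (∏ i, M i (σ i)) = (List.ofFn fun i => M i (σ i)).prod :=
    List.prod_ofFn.symm
  rw [Units.smul_def, map_zsmul, h1, map_list_prod, List.map_ofFn]
  rfl
end

section
/- Let N ≥ 2, r ≥ 1, n ≥ 1, let f : [r] × [n] → ℤ/N, and let H be the rN × nN matrix over F_2 whose (i, j) block is the circulant permutation matrix P_N^{f(i,j)}. Then H is free of 4-cycles (equivalently, the Tanner graph of H has girth at least 6) if and only if for all i_1 ≠ i_2 in [r] and all j_1 ≠ j_2 in [n], f(i_1, j_1) − f(i_2, j_1) ≢ f(i_1, j_2) − f(i_2, j_2) (mod N). -/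
/-- A matrix over a field is *free of 4-cycles* (equivalently, its Tanner graph has
girth `> 4`) if no two distinct rows and two distinct columns have all four
corresponding entries nonzero. -/
def FreeOfFourCycles {α β F : Type*} [Zero F] (M : Matrix α β F) : Prop :=
  ¬ ∃ (i1 i2 : α) (j1 j2 : β), i1 ≠ i2 ∧ j1 ≠ j2 ∧
      M i1 j1 ≠ 0 ∧ M i1 j2 ≠ 0 ∧ M i2 j1 ≠ 0 ∧ M i2 j2 ≠ 0

/-- **Fossorier's criterion.**  Let `N ≥ 2`, `f : [r] × [n] → ℤ/N`, and let `H` be the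
`rN × nN` matrix over `F₂` whose `(i, j)` block is the circulant permutation matrix
`P_N ^ f(i,j)` (entry at `(a, b)` is `1` iff `b = a + f i j` in `ℤ/N`).  Then `H` is
free of 4-cycles (its Tanner graph has girth at least 6) if and only if
`f i1 j1 - f i2 j1 ≠ f i1 j2 - f i2 j2` in `ℤ/N` for all `i1 ≠ i2`, `j1 ≠ j2`. -/
theorem cpm_qc_free_of_four_cycles_iff
    (N : ℕ) (hN : 2 ≤ N) (r n : ℕ) (hr : 1 ≤ r) (hn : 1 ≤ n)
    (f : Fin r → Fin n → ZMod N)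
    (H : Matrix (Fin r × ZMod N) (Fin n × ZMod N) (ZMod 2))
    (hH : H = Matrix.of fun p c => if c.2 = p.2 + f p.1 c.1 then 1 else 0) :
    FreeOfFourCycles H ↔
      ∀ i1 i2 : Fin r, ∀ j1 j2 : Fin n, i1 ≠ i2 → j1 ≠ j2 →
        f i1 j1 - f i2 j1 ≠ f i1 j2 - f i2 j2 := by
  subst hH
  have hne : ∀ (p : Fin r × ZMod N) (c : Fin n × ZMod N),
      (Matrix.of fun p c => if c.2 = p.2 + f p.1 c.1 then (1 : ZMod 2) else 0) p c ≠ 0 ↔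
      c.2 = p.2 + f p.1 c.1 := by
    intro p c
    simp [Matrix.of_apply]
  constructor
  · intro hfree i1 i2 j1 j2 hi hj heq
    apply hfree
    refine ⟨(i1, 0), (i2, f i1 j1 - f i2 j1), (j1, f i1 j1), (j2, f i1 j2),
      ?_, ?_, ?_, ?_, ?_, ?_⟩
    · simp [Prod.ext_iff, hi]
    · simp [Prod.ext_iff, hj]
    · rw [hne]; simp
    · rw [hne]; simp
    · rw [hne]; simp
    · rw [hne]; show f i1 j2 = (f i1 j1 - f i2 j1) + f i2 j2; rw [heq]; ring
  · rintro hcond ⟨⟨i1, a1⟩, ⟨i2, a2⟩, ⟨j1, b1⟩, ⟨j2, b2⟩, hrow, hcol, h11, h12, h21, h22⟩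
    rw [hne] at h11 h12 h21 h22
    simp only at h11 h12 h21 h22
    have hi : i1 ≠ i2 := by
      rintro rfl
      apply hrow
      have : a1 = a2 := by
        have := h11.symm.trans h21
        exact add_right_cancel this
      simp [this]
    have hj : j1 ≠ j2 := by
      rintro rfl
      apply hcol
      have : b1 = b2 := h11.trans h12.symm
      simp [this]
    apply hcond i1 i2 j1 j2 hi hj
    subst h11 h12
    have e1 : f i1 j1 - f i2 j1 = a2 - a1 := by
      rw [eq_sub_iff_add_eq]
      linear_combination h21
    have e2 : f i1 j2 - f i2 j2 = a2 - a1 := by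
      rw [eq_sub_iff_add_eq]
      linear_combination h22
    rw [e1, e2]
end

section
/- Let F_q be a finite field, N ≥ 2 with gcd(N, q) = 1, and 1 ≤ r < m. Let a_1(x), …, a_m(x) ∈ F_q[x]/(x^N − 1), with associated N×N circulant matrices A_1, …, A_m over F_q. Suppose there is a monic polynomial g(x) ∈ F_q[x] of degree τ with 0 ≤ τ < N such that for all 1 ≤ i < j ≤ m, gcd(â_i(x) − â_j(x), x^N − 1) = g(x) in F_q[x], where â_i denotes the representative of a_i of degree < N. Then for every r-element subset {i_1, …, i_r} ⊆ [m], the r(N−τ) × r(N−τ) block matrix whose (s, l) block (s, l ∈ [r]) is Pu(A_{i_l}^{s−1}, τ) (with A^0 = I_N) is invertible over F_q; that is, the block matrix H′ with blocks Pu(A_j^{s−1}, τ) for s ∈ [r], j ∈ [m] is the parity-check matrix of an MDS array code with sub-packetization level N − τ. -/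
open Polynomial Matrix

/-- The `N × N` circulant matrix over `F` associated with the coefficient vector
`cf : Fin N → F` (i.e. with `a(x) = ∑ j, cf j • x ^ j` in `F[x]/(x^N - 1)`):
its `(a, b)` entry is `cf ((b - a) mod N)`. -/
def circMat {F : Type*} (N : ℕ) (cf : Fin N → F) : Matrix (Fin N) (Fin N) F :=
  Matrix.of fun a b => cf (b - a)

/-- The representative polynomial `â(x) = ∑_{u < N} cf u • x ^ u ∈ F[x]` of the
coefficient vector `cf`. -/
noncomputable def repPoly {F : Type*} [Semiring F] (N : ℕ) (cf : Fin N → F) : Polynomial F :=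
  ∑ u : Fin N, Polynomial.C (cf u) * Polynomial.X ^ (u : ℕ)

section Aux

open Matrix

variable {F : Type*} [Field F] {N : ℕ}

lemma root_pow_N : (AdjoinRoot.root ((X:F[X])^N - 1))^N = 1 := by
  have h := AdjoinRoot.mk_self (f := ((X:F[X])^N - 1))
  rw [map_sub, map_pow, AdjoinRoot.mk_X, _root_.map_one, sub_eq_zero] at h
  exact h

lemma theta_sub_exp (b u : Fin N) :
    (AdjoinRoot.root ((X:F[X])^N - 1)) ^ (N - ((b - u : Fin N) : ℕ))
      = (AdjoinRoot.root ((X:F[X])^N - 1)) ^ ((u:ℕ) + (N - (b:ℕ))) := by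
  have hbv := b.isLt; have huv := u.isLt
  have hsub : ((b - u : Fin N) : ℕ) = (N - (u:ℕ) + (b:ℕ)) % N := by rw [Fin.sub_def]
  rcases le_or_gt (u:ℕ) (b:ℕ) with h | h
  · have h1 : N - (u:ℕ) + (b:ℕ) = N + ((b:ℕ) - (u:ℕ)) := by omega
    have h2 : ((b - u : Fin N):ℕ) = (b:ℕ) - (u:ℕ) := by
      rw [hsub, h1, Nat.add_mod_left, Nat.mod_eq_of_lt (by omega)]
    rw [h2]; congr 1; omega
  · have h2 : ((b - u : Fin N):ℕ) = N - (u:ℕ) + (b:ℕ) := by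
      rw [hsub, Nat.mod_eq_of_lt (by omega)]
    rw [h2]
    have h3 : (u:ℕ) + (N - (b:ℕ)) = (N - (N - (u:ℕ) + (b:ℕ))) + N := by omega
    rw [h3, pow_add, root_pow_N, mul_one]

noncomputable def phiMap (F : Type*) [Field F] (N : ℕ) (w : Fin N → F) :
    AdjoinRoot ((X:F[X])^N - 1) :=
  ∑ b : Fin N, w b • (AdjoinRoot.root ((X:F[X])^N - 1))^(N - (b:ℕ))

lemma mk_C_mul_X_pow (c : F) (k : ℕ) :
    (AdjoinRoot.mk ((X:F[X])^N - 1)) (C c * X^k)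
      = c • (AdjoinRoot.root ((X:F[X])^N - 1))^k := by
  rw [← Polynomial.smul_eq_C_mul, ← AdjoinRoot.smul_mk, map_pow, AdjoinRoot.mk_X]

lemma phi_mulVec [NeZero N] (cf w : Fin N → F) :
    phiMap F N (circMat N cf *ᵥ w)
      = AdjoinRoot.mk ((X:F[X])^N - 1) (repPoly N cf) * phiMap F N w := by
  unfold phiMap circMat repPoly
  simp only [Matrix.mulVec, dotProduct, Matrix.of_apply]
  rw [map_sum, Finset.sum_mul_sum]
  simp only [Finset.sum_smul]
  rw [Finset.sum_comm]
  conv_rhs => rw [Finset.sum_comm]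
  refine Finset.sum_congr rfl fun b _ => ?_
  rw [← Equiv.sum_comp (Equiv.subLeft b)]
  refine Finset.sum_congr rfl fun u _ => ?_
  simp only [Equiv.subLeft_apply]
  rw [sub_sub_cancel, theta_sub_exp b u, mk_C_mul_X_pow, pow_add,
    smul_mul_smul_comm]

lemma phi_pow_mulVec [NeZero N] (cf w : Fin N → F) (s : ℕ) :
    phiMap F N ((circMat N cf)^s *ᵥ w)
      = (AdjoinRoot.mk ((X:F[X])^N - 1) (repPoly N cf))^s * phiMap F N w := by
  induction s generalizing w with
  | zero => simp [Matrix.one_mulVec]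
  | succ n ih =>
      rw [pow_succ, ← Matrix.mulVec_mulVec, ih, phi_mulVec, pow_succ]
      ring

lemma sum_eq_sum_low {M : Type*} [AddCommMonoid M] {k : ℕ} (hk : k ≤ N) (gf : Fin N → M)
    (hg : ∀ b : Fin N, k ≤ (b:ℕ) → gf b = 0) :
    ∑ b, gf b = ∑ c : Fin k, gf (Fin.castLE hk c) := by
  classical
  rw [eq_comm]
  have h1 : ∑ c : Fin k, gf (Fin.castLE hk c)
      = ∑ b ∈ Finset.univ.map (Fin.castLEEmb hk), gf b := by
    rw [Finset.sum_map]; rfl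
  rw [h1]
  apply Finset.sum_subset (Finset.subset_univ _)
  intro b _ hb
  apply hg
  by_contra hlt
  push_neg at hlt
  exact hb (Finset.mem_map.mpr ⟨⟨(b:ℕ), hlt⟩, Finset.mem_univ _, by
    apply Fin.ext; simp [Fin.castLEEmb]⟩)

lemma sum_eq_sum_high {M : Type*} [AddCommMonoid M] {k : ℕ} (hk : k ≤ N) (gf : Fin N → M)
    (hg : ∀ b : Fin N, (b:ℕ) < N - k → gf b = 0) :
    ∑ b, gf b = ∑ d : Fin k, gf ⟨N - k + (d:ℕ), by have := d.isLt; omega⟩ := by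
  classical
  rw [eq_comm]
  have hinj : Function.Injective
      (fun d : Fin k => (⟨N - k + (d:ℕ), by have := d.isLt; omega⟩ : Fin N)) := by
    intro d1 d2 hd
    have h' := congrArg Fin.val hd
    simp only at h'
    apply Fin.ext
    omega
  have h1 : ∑ d : Fin k, gf ⟨N - k + (d:ℕ), by have := d.isLt; omega⟩
      = ∑ b ∈ Finset.univ.map ⟨_, hinj⟩, gf b := by
    rw [Finset.sum_map]; rfl
  rw [h1]
  apply Finset.sum_subset (Finset.subset_univ _)
  intro b _ hb
  apply hg
  by_contra hlt
  push_neg at hlt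
  refine hb (Finset.mem_map.mpr ⟨⟨(b:ℕ) - (N - k), by have := b.isLt; omega⟩,
    Finset.mem_univ _, ?_⟩)
  apply Fin.ext
  simp only [Function.Embedding.coeFn_mk]
  have := b.isLt
  omega

end Aux

/-- **Lv et al.'s puncturing lemma.**  Let `gcd(N, q) = 1`, `1 ≤ r < m`, and let
`a 1, …, a m ∈ F_q[x]/(x^N - 1)` have associated circulant matrices `A 1, …, A m`.
Suppose there is a monic `g ∈ F_q[x]` of degree `τ < N` such that
`gcd(â i - â j, x^N - 1)` is (associated to, hence equals up to the monic
normalization) `g` for all `i ≠ j`.  Then for every `r`-element subset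
`{i 1, …, i r} ⊆ [m]`, the `r(N-τ) × r(N-τ)` block matrix with `(s, l)` block
`Pu(A (i l) ^ (s - 1), τ)` (puncturing the last `τ` rows and columns) is invertible
over `F_q`; i.e. the punctured block Vandermonde matrix is the parity-check matrix
of an MDS array code with sub-packetization level `N - τ`. -/
theorem punctured_vandermonde_mds
    (q : ℕ) (F : Type*) [Field F] [Fintype F] [DecidableEq F] (hq : Fintype.card F = q)
    (N : ℕ) (hN : 2 ≤ N) (hcop : Nat.Coprime N q)
    (r m : ℕ) (hr : 1 ≤ r) (hrm : r < m)
    (cf : Fin m → Fin N → F)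
    (g : Polynomial F) (hg : g.Monic) (τ : ℕ) (hτ : τ < N) (hdeg : g.natDegree = τ)
    (hgcd : ∀ i j : Fin m, i ≠ j →
      Associated
        (EuclideanDomain.gcd (repPoly N (cf i) - repPoly N (cf j))
          (Polynomial.X ^ N - 1)) g) :
    ∀ t : Fin r → Fin m, Function.Injective t →
      (Matrix.of fun p c : Fin r × Fin (N - τ) =>
        (circMat N (cf (t c.1)) ^ (p.1 : ℕ))
          (Fin.castLE (Nat.sub_le N τ) p.2) (Fin.castLE (Nat.sub_le N τ) c.2)).det ≠ 0 := by
  classical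
  intro t ht
  haveI : NeZero N := ⟨by omega⟩
  intro hdet
  obtain ⟨v, hv0, hMv⟩ := Matrix.exists_mulVec_eq_zero_iff.mpr hdet
  -- basic facts about f := X^N - 1
  have hfdeg : ((X:F[X])^N - 1).natDegree = N := by
    have h0 : ((X:F[X])^N - 1) = X^N - C 1 := by rw [C_1]
    rw [h0, natDegree_X_pow_sub_C]
  have hf_ne : ((X:F[X])^N - 1) ≠ 0 := by
    intro h0
    rw [h0] at hfdeg
    simp at hfdeg
    omega
  -- squarefree
  have hNF : (N : F) ≠ 0 := by
    intro h0
    have hp : (ringChar F) ∣ N := (CharP.cast_eq_zero_iff F (ringChar F) N).mp h0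
    obtain ⟨n, hp_prime, hcard⟩ := FiniteField.card F (ringChar F)
    have hpq : (ringChar F) ∣ q := by
      rw [← hq, hcard]
      exact dvd_pow_self _ (by exact_mod_cast n.ne_zero)
    have h1 : (ringChar F) ∣ 1 := by
      calc (ringChar F) ∣ Nat.gcd N q := Nat.dvd_gcd hp hpq
      _ = 1 := hcop
    exact hp_prime.one_lt.ne' (Nat.dvd_one.mp h1)
  have hsq : Squarefree ((X:F[X])^N - 1) := by
    have h1 : ((X:F[X])^N - C 1).Separable := separable_X_pow_sub_C (1:F) hNF one_ne_zero
    rw [C_1] at h1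
    exact h1.squarefree
  -- g divides f, define h
  have hgdvd : g ∣ ((X:F[X])^N - 1) := by
    have h01 : (⟨0, by omega⟩ : Fin m) ≠ ⟨1, by omega⟩ := by
      simp [Fin.ext_iff]
    exact ((hgcd _ _ h01).symm.dvd).trans (EuclideanDomain.gcd_dvd_right _ _)
  obtain ⟨h, hfgh⟩ := hgdvd
  have hg0 : g ≠ 0 := hg.ne_zero
  have hh0 : h ≠ 0 := by
    intro h0; rw [h0, mul_zero] at hfgh; exact hf_ne hfgh
  have hhdeg : h.natDegree = N - τ := by
    have := natDegree_mul hg0 hh0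
    rw [← hfgh, hfdeg, hdeg] at this
    omega
  -- pairwise facts
  set a : Fin r → F[X] := fun l => repPoly N (cf (t l)) with ha
  have hkey : ∀ l l' : Fin r, l ≠ l' →
      g ∣ (a l - a l') ∧ IsCoprime (a l - a l') h := by
    intro l l' hll
    have hne : t l ≠ t l' := fun hc => hll (ht hc)
    have hassoc := hgcd (t l) (t l') hne
    constructor
    · exact (hassoc.symm.dvd).trans (EuclideanDomain.gcd_dvd_left _ _)
    · rw [← EuclideanDomain.gcd_isUnit_iff]
      set c := EuclideanDomain.gcd (a l - a l') h with hc
      have hcd : c ∣ (a l - a l') := EuclideanDomain.gcd_dvd_left _ _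
      have hch : c ∣ h := EuclideanDomain.gcd_dvd_right _ _
      have hcg : c ∣ g := by
        have h2 : c ∣ EuclideanDomain.gcd (a l - a l') ((X:F[X])^N - 1) :=
          EuclideanDomain.dvd_gcd hcd (hch.trans ⟨g, by rw [hfgh]; ring⟩)
        exact h2.trans hassoc.dvd
      exact hsq c (by rw [hfgh]; exact mul_dvd_mul hcg hch)
  -- vectors
  set A : Fin r → Matrix (Fin N) (Fin N) F := fun l => circMat N (cf (t l)) with hA
  set vt : Fin r → Fin N → F := fun l b =>
    if hb : (b:ℕ) < N - τ then v (l, ⟨(b:ℕ), hb⟩) else 0 with hvt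
  set y : Fin r → Fin N → F := fun s p => ∑ l, ((A l ^ (s:ℕ)) *ᵥ (vt l)) p with hy
  have hy0 : ∀ (s : Fin r) (p : Fin N), (p:ℕ) < N - τ → y s p = 0 := by
    intro s p hp
    have hker := congrFun hMv (s, ⟨(p:ℕ), hp⟩)
    simp only [Matrix.mulVec, dotProduct, Matrix.of_apply, Pi.zero_apply] at hker
    rw [Fintype.sum_prod_type] at hker
    rw [hy]
    simp only
    rw [← hker]
    refine Finset.sum_congr rfl fun l _ => ?_
    rw [Matrix.mulVec, dotProduct]
    rw [sum_eq_sum_low (Nat.sub_le N τ)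
      (fun b => (A l ^ (s:ℕ)) p b * vt l b)
      (fun b hb => by
        simp only [hvt, dif_neg (not_lt.mpr hb), mul_zero])]
    refine Finset.sum_congr rfl fun c _ => ?_
    have h1 : Fin.castLE (Nat.sub_le N τ) (⟨(p:ℕ), hp⟩ : Fin (N - τ)) = p := by
      apply Fin.ext; rfl
    have h2 : vt l (Fin.castLE (Nat.sub_le N τ) c) = v (l, c) := by
      simp only [hvt]
      rw [dif_pos (by exact c.isLt)]
      rfl
    rw [h2, h1]
  -- phi of y as a sum
  have hphiy : ∀ s : Fin r, phiMap F N (y s)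
      = ∑ l, (AdjoinRoot.mk ((X:F[X])^N - 1) (a l))^(s:ℕ) * phiMap F N (vt l) := by
    intro s
    have h1 : phiMap F N (y s) = ∑ l, phiMap F N ((A l ^ (s:ℕ)) *ᵥ vt l) := by
      unfold phiMap
      simp only [hy, Finset.sum_smul]
      rw [Finset.sum_comm]
    rw [h1]
    exact Finset.sum_congr rfl fun l _ => phi_pow_mulVec (cf (t l)) (vt l) (s:ℕ)
  set Q : Fin r → F[X] := fun l =>
    ∑ c : Fin (N - τ), C (v (l, c)) * X^(N - τ - 1 - (c:ℕ)) with hQdef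
  set Z : Fin r → F[X] := fun s =>
    ∑ d : Fin τ, C (y s ⟨N - τ + (d:ℕ), by have := d.isLt; omega⟩) * X^(τ - 1 - (d:ℕ))
    with hZdef
  have hQv : ∀ l, phiMap F N (vt l)
      = AdjoinRoot.mk ((X:F[X])^N - 1) (X^(τ+1) * Q l) := by
    intro l
    unfold phiMap
    rw [sum_eq_sum_low (Nat.sub_le N τ) _
      (fun b hb => by simp only [hvt, dif_neg (not_lt.mpr hb), zero_smul])]
    rw [hQdef]
    simp only
    rw [Finset.mul_sum, _root_.map_sum]
    refine Finset.sum_congr rfl fun c _ => ?_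
    have h2 : vt l (Fin.castLE (Nat.sub_le N τ) c) = v (l, c) := by
      simp only [hvt]; exact dif_pos c.isLt
    have h3 : (X:F[X])^(τ+1) * (C (v (l,c)) * X^(N - τ - 1 - (c:ℕ)))
        = C (v (l,c)) * X^(N - (c:ℕ)) := by
      rw [mul_left_comm, ← pow_add]
      have : (τ+1) + (N - τ - 1 - (c:ℕ)) = N - (c:ℕ) := by have := c.isLt; omega
      rw [this]
    rw [h2, h3, mk_C_mul_X_pow]
    rfl
  have hZy : ∀ s, phiMap F N (y s)
      = AdjoinRoot.mk ((X:F[X])^N - 1) (X * Z s) := by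
    intro s
    unfold phiMap
    rw [sum_eq_sum_high (le_of_lt hτ) _ (fun b hb => by rw [hy0 s b hb, zero_smul])]
    rw [hZdef]
    simp only
    rw [Finset.mul_sum, _root_.map_sum]
    refine Finset.sum_congr rfl fun d _ => ?_
    have h3 : (X:F[X]) * (C (y s ⟨N - τ + (d:ℕ), by have := d.isLt; omega⟩)
          * X^(τ - 1 - (d:ℕ)))
        = C (y s ⟨N - τ + (d:ℕ), by have := d.isLt; omega⟩) * X^(τ - (d:ℕ)) := by
      rw [mul_left_comm, ← pow_succ']
      have : (τ - 1 - (d:ℕ)) + 1 = τ - (d:ℕ) := by have := d.isLt; omega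
      rw [this]
    rw [h3, mk_C_mul_X_pow]
    have h4 : N - ((⟨N - τ + (d:ℕ), by have := d.isLt; omega⟩ : Fin N) : ℕ)
        = τ - (d:ℕ) := by
      have := d.isLt; simp only; omega
    rw [h4]
  have hE : ∀ s : Fin r,
      ((X:F[X])^N - 1) ∣ ((∑ l, (a l)^(s:ℕ) * Q l) - X^(N-τ) * Z s) := by
    intro s
    rw [← AdjoinRoot.mk_eq_zero]
    have hbase : (AdjoinRoot.mk ((X:F[X])^N - 1)) (X * Z s)
        = ∑ l, (AdjoinRoot.mk ((X:F[X])^N - 1) (a l))^(s:ℕ)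
            * (AdjoinRoot.mk ((X:F[X])^N - 1)) (X^(τ+1) * Q l) := by
      rw [← hZy s, hphiy s]
      exact Finset.sum_congr rfl fun l _ => by rw [hQv l]
    set θ : AdjoinRoot ((X:F[X])^N - 1) := AdjoinRoot.root ((X:F[X])^N - 1) with hθ
    have hθN : θ^(N - τ - 1) * θ^(τ+1) = 1 := by
      rw [← pow_add]
      have he : (N - τ - 1) + (τ + 1) = N := by omega
      rw [he, hθ]
      exact root_pow_N
    have hmul := congrArg (fun z => θ^(N - τ - 1) * z) hbase
    simp only [Finset.mul_sum] at hmul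
    have hL : θ^(N - τ - 1) * (AdjoinRoot.mk ((X:F[X])^N - 1)) (X * Z s)
        = (AdjoinRoot.mk ((X:F[X])^N - 1)) (X^(N-τ) * Z s) := by
      rw [_root_.map_mul, AdjoinRoot.mk_X, _root_.map_mul, _root_.map_pow, AdjoinRoot.mk_X,
        ← mul_assoc, ← pow_succ]
      have he : (N - τ - 1) + 1 = N - τ := by omega
      rw [he]
    have hR : ∀ l : Fin r, θ^(N - τ - 1)
          * ((AdjoinRoot.mk ((X:F[X])^N - 1) (a l))^(s:ℕ)
            * (AdjoinRoot.mk ((X:F[X])^N - 1)) (X^(τ+1) * Q l))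
        = (AdjoinRoot.mk ((X:F[X])^N - 1) (a l))^(s:ℕ)
            * (AdjoinRoot.mk ((X:F[X])^N - 1)) (Q l) := by
      intro l
      rw [_root_.map_mul, _root_.map_pow, AdjoinRoot.mk_X]
      calc θ^(N - τ - 1) * ((AdjoinRoot.mk ((X:F[X])^N - 1) (a l))^(s:ℕ)
              * (θ^(τ+1) * (AdjoinRoot.mk ((X:F[X])^N - 1)) (Q l)))
          = (θ^(N - τ - 1) * θ^(τ+1))
              * ((AdjoinRoot.mk ((X:F[X])^N - 1) (a l))^(s:ℕ)
                * (AdjoinRoot.mk ((X:F[X])^N - 1)) (Q l)) := by ring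
        _ = _ := by rw [hθN, one_mul]
    rw [hL] at hmul
    have hmul2 : (AdjoinRoot.mk ((X:F[X])^N - 1)) (X^(N-τ) * Z s)
        = ∑ l, (AdjoinRoot.mk ((X:F[X])^N - 1) (a l))^(s:ℕ)
            * (AdjoinRoot.mk ((X:F[X])^N - 1)) (Q l) := by
      rw [hmul]
      exact Finset.sum_congr rfl fun l _ => hR l
    rw [_root_.map_sub, sub_eq_zero, hmul2, _root_.map_sum]
    exact Finset.sum_congr rfl fun l _ => by rw [_root_.map_mul, _root_.map_pow]
  -- degree bounds
  have hdegQ : ∀ l, (Q l).degree < ((N - τ : ℕ) : WithBot ℕ) := by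
    intro l
    rw [hQdef]
    refine lt_of_le_of_lt (Polynomial.degree_sum_le _ _) ?_
    rw [Finset.sup_lt_iff (WithBot.bot_lt_coe _)]
    intro c _
    refine lt_of_le_of_lt (Polynomial.degree_C_mul_X_pow_le _ _) ?_
    exact_mod_cast (by have := c.isLt; omega : (N - τ - 1 - (c:ℕ)) < N - τ)
  have hdegZ : ∀ s, (Z s).degree < ((τ : ℕ) : WithBot ℕ) := by
    intro s
    rw [hZdef]
    refine lt_of_le_of_lt (Polynomial.degree_sum_le _ _) ?_
    rw [Finset.sup_lt_iff (WithBot.bot_lt_coe _)]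
    intro d _
    refine lt_of_le_of_lt (Polynomial.degree_C_mul_X_pow_le _ _) ?_
    exact_mod_cast (by have := d.isLt; omega : (τ - 1 - (d:ℕ)) < τ)
  have hdegQsum : (∑ l, Q l).degree < ((N - τ : ℕ) : WithBot ℕ) := by
    refine lt_of_le_of_lt (Polynomial.degree_sum_le _ _) ?_
    rw [Finset.sup_lt_iff (WithBot.bot_lt_coe _)]
    exact fun l _ => hdegQ l
  have hcastN : ((N - τ : ℕ) : WithBot ℕ) + ((τ : ℕ) : WithBot ℕ) = ((N:ℕ) : WithBot ℕ) := by
    rw [← Nat.cast_add]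
    congr 1
    omega
  have hNτN : ((N - τ : ℕ) : WithBot ℕ) ≤ ((N:ℕ) : WithBot ℕ) := by
    exact_mod_cast Nat.sub_le N τ
  -- the s = 0 equation
  have hE0 := hE ⟨0, by omega⟩
  have hv00 : (((⟨0, by omega⟩ : Fin r)) : ℕ) = 0 := rfl
  rw [hv00] at hE0
  simp only [pow_zero, one_mul] at hE0
  have heq0 : (∑ l, Q l) - X^(N-τ) * Z ⟨0, by omega⟩ = 0 := by
    refine Polynomial.eq_zero_of_dvd_of_degree_lt hE0 ?_
    rw [Polynomial.degree_eq_natDegree hf_ne, hfdeg]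
    refine lt_of_le_of_lt (Polynomial.degree_sub_le _ _) ?_
    rw [max_lt_iff]
    constructor
    · exact lt_of_lt_of_le hdegQsum hNτN
    · rw [Polynomial.degree_mul, Polynomial.degree_X_pow]
      calc ((N - τ : ℕ) : WithBot ℕ) + (Z ⟨0, by omega⟩).degree
          < ((N - τ : ℕ) : WithBot ℕ) + ((τ:ℕ) : WithBot ℕ) :=
            WithBot.add_lt_add_left (WithBot.coe_ne_bot) (hdegZ _)
        _ = _ := hcastN
  have heq : ∑ l, Q l = X^(N-τ) * Z ⟨0, by omega⟩ := sub_eq_zero.mp heq0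
  have hZ00 : Z ⟨0, by omega⟩ = 0 := by
    by_contra hz
    have h1 : ((N - τ:ℕ) : WithBot ℕ) ≤ (X^(N-τ) * Z ⟨0, by omega⟩).degree := by
      rw [Polynomial.degree_mul, Polynomial.degree_X_pow]
      exact le_add_of_nonneg_right (Polynomial.zero_le_degree_iff.mpr hz)
    rw [← heq] at h1
    exact absurd h1 (not_le.mpr hdegQsum)
  have hQsum : ∑ l, Q l = 0 := by rw [heq, hZ00, mul_zero]
  -- all Z s vanish
  have hgf : g ∣ ((X:F[X])^N - 1) := ⟨h, hfgh⟩
  have hZall : ∀ s : Fin r, Z s = 0 := by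
    intro s
    have hgs : g ∣ ∑ l, (a l)^(s:ℕ) * Q l := by
      have hrw : ∑ l, (a l)^(s:ℕ) * Q l
          = ∑ l, ((a l)^(s:ℕ) - (a ⟨0, by omega⟩)^(s:ℕ)) * Q l
            + (a ⟨0, by omega⟩)^(s:ℕ) * (∑ l, Q l) := by
        rw [Finset.mul_sum, ← Finset.sum_add_distrib]
        exact Finset.sum_congr rfl fun l _ => by ring
      rw [hrw, hQsum, mul_zero, add_zero]
      refine Finset.dvd_sum fun l _ => Dvd.dvd.mul_right ?_ _
      rcases eq_or_ne l ⟨0, by omega⟩ with hl | hl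
      · rw [hl, sub_self]
        exact dvd_zero g
      · exact ((hkey l ⟨0, by omega⟩ hl).1).trans (sub_dvd_pow_sub_pow _ _ _)
    have hgz : g ∣ X^(N-τ) * Z s := by
      have h3 := dvd_sub hgs (hgf.trans (hE s))
      simpa using h3
    have hXf : IsCoprime (X : F[X]) ((X:F[X])^N - 1) := by
      refine ⟨X^(N-1), -1, ?_⟩
      have h4 : (X:F[X])^(N-1) * X = X^N := by
        rw [← pow_succ]
        congr 1
        omega
      rw [h4]
      ring
    have hXg : IsCoprime ((X:F[X])^(N-τ)) g :=
      IsCoprime.pow_left (hXf.of_isCoprime_of_dvd_right hgf)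
    have hgZ : g ∣ Z s := (hXg.symm).dvd_of_dvd_mul_left hgz
    refine Polynomial.eq_zero_of_dvd_of_degree_lt hgZ ?_
    rw [Polynomial.degree_eq_natDegree hg0, hdeg]
    exact hdegZ s
  have hfs : ∀ s : Fin r, ((X:F[X])^N - 1) ∣ ∑ l, (a l)^(s:ℕ) * Q l := by
    intro s
    have h1 := hE s
    rw [hZall s, mul_zero, sub_zero] at h1
    exact h1
  -- Vandermonde finish
  set B : Matrix (Fin r) (Fin r) F[X] := Matrix.of (fun s l : Fin r => (a l)^(s:ℕ)) with hB
  have hdetB : B.det = ∏ i : Fin r, ∏ j ∈ Finset.Ioi i, (a j - a i) := by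
    have hBt : B = (Matrix.vandermonde a)ᵀ := by
      ext s l
      rfl
    rw [hBt, Matrix.det_transpose, Matrix.det_vandermonde]
  have hdvdall : ∀ l, ((X:F[X])^N - 1) ∣ B.det * Q l := by
    intro l
    have hsm : B.det • Q = B.adjugate *ᵥ (B *ᵥ Q) := by
      rw [Matrix.mulVec_mulVec, Matrix.adjugate_mul, Matrix.smul_mulVec,
        Matrix.one_mulVec]
    have h1 := congrFun hsm l
    rw [Pi.smul_apply, smul_eq_mul] at h1
    rw [h1]
    simp only [Matrix.mulVec, dotProduct]
    refine Finset.dvd_sum fun s _ => ?_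
    refine Dvd.dvd.mul_left ?_ _
    have h2 : ∑ l', B s l' * Q l' = ∑ l', (a l')^(s:ℕ) * Q l' := rfl
    rw [h2]
    exact hfs s
  have hcopBh : IsCoprime B.det h := by
    rw [hdetB]
    refine IsCoprime.prod_left fun i _ => ?_
    refine IsCoprime.prod_left fun j hj => ?_
    exact (hkey j i (Finset.mem_Ioi.mp hj).ne').2
  have hQ0 : ∀ l, Q l = 0 := by
    intro l
    have h1 : h ∣ B.det * Q l := by
      refine Dvd.dvd.trans ⟨g, by rw [hfgh]; ring⟩ (hdvdall l)
    have h2 : h ∣ Q l := (hcopBh.symm).dvd_of_dvd_mul_left h1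
    refine Polynomial.eq_zero_of_dvd_of_degree_lt h2 ?_
    rw [Polynomial.degree_eq_natDegree hh0, hhdeg]
    exact hdegQ l
  -- conclude v = 0
  apply hv0
  funext lc
  obtain ⟨l, c⟩ := lc
  have h1 := congrArg (fun p => Polynomial.coeff p (N - τ - 1 - (c:ℕ))) (hQ0 l)
  simp only [hQdef, Polynomial.finset_sum_coeff, Polynomial.coeff_C_mul,
    Polynomial.coeff_X_pow, Polynomial.coeff_zero, mul_ite, mul_one, mul_zero] at h1
  rw [Finset.sum_eq_single c
    (fun c' _ hc' => by
      rw [if_neg]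
      intro hEq
      apply hc'
      have h2 := c'.isLt
      have h3 := c.isLt
      apply Fin.ext
      omega)
    (fun hc => absurd (Finset.mem_univ c) hc)] at h1
  rw [if_pos rfl] at h1
  exact h1
end

section
/- Let N be an odd prime, let q be a prime power that is a primitive root modulo N (the multiplicative order of q in (ℤ/N)^× is N − 1), and let 1 ≤ J ≤ N − 1. Let H′′ be the J(N−1) × N(N−1) matrix over F_q whose (i, j) block (i ∈ [J], j ∈ [N]) is Pu(P_N^{(i−1)(j−1) mod N}, 1). Then: (a) for every J-element subset {t_1, …, t_J} ⊆ {0, 1, …, N−1}, the J(N−1) × J(N−1) block matrix whose (i, l) block is Pu(P_N^{(i−1) t_l mod N}, 1) is invertible over F_q, so H′′ is the parity-check matrix of an MDS array code over F_q with sub-packetization level N − 1; and (b) H′′ is free of 4-cycles. -/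
/-- The `N × N` circulant permutation matrix `P_N ^ k` over `F`: its `(a, b)` entry is
`1` exactly when `b ≡ a + k (mod N)`. -/
def cpm (F : Type*) [Zero F] [One F] (N k : ℕ) : Matrix (Fin N) (Fin N) F :=
  Matrix.of fun a b => if ((b : ℕ) : ZMod N) = ((a : ℕ) : ZMod N) + (k : ZMod N) then 1 else 0

/-- Frobenius step: if a polynomial with coefficients coming from a finite field `F`
(of cardinality `q`) has a root `ρ` in an extension `K`, then `ρ ^ q` is also a root. -/
lemma frob_step {F K : Type*} [Field F] [Fintype F] [Field K] [Algebra F K]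
    (P : Polynomial F) (ρ : K) (h : (P.map (algebraMap F K)).eval ρ = 0) :
    (P.map (algebraMap F K)).eval (ρ ^ Fintype.card F) = 0 := by
  obtain ⟨n, hp, hcard⟩ := FiniteField.card F (ringChar F)
  haveI : CharP K (ringChar F) := charP_of_injective_algebraMap (algebraMap F K).injective _
  haveI : Fact (Nat.Prime (ringChar F)) := ⟨hp⟩
  set φ := iterateFrobenius K (ringChar F) n with hφdef
  have hφ : ∀ x : K, φ x = x ^ Fintype.card F := fun x => by
    rw [hφdef, iterateFrobenius_def, hcard]
  have hmap : (P.map (algebraMap F K)).map φ = P.map (algebraMap F K) := by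
    rw [Polynomial.map_map]
    congr 1
    ext c
    simp only [RingHom.comp_apply]
    rw [hφ, ← map_pow, FiniteField.pow_card]
  have h2 := congrArg φ h
  rw [map_zero, ← Polynomial.eval₂_at_apply, ← Polynomial.eval_map, hmap, hφ] at h2
  exact h2

/-- **Block MDS LDPC codes from punctured CPMs.**  Let `N` be an odd prime, let `q`
(the size of the finite field `F`) be a primitive root modulo `N`, and `1 ≤ J ≤ N - 1`.
Let `H''` be the `J(N-1) × N(N-1)` matrix whose `(i, j)` block is
`Pu(P_N ^ ((i-1)(j-1) mod N), 1)` (the CPM with its last row and column deleted).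
Then (a) for every `J`-element subset `{t 1, …, t J} ⊆ {0, …, N-1}` the corresponding
`J(N-1) × J(N-1)` block matrix is invertible over `F` — so `H''` is the parity-check
matrix of an MDS array code with sub-packetization level `N - 1` — and (b) `H''` is
free of 4-cycles. -/
theorem punctured_cpm_block_mds_ldpc
    (N : ℕ) (hNp : N.Prime) (hNodd : Odd N)
    (q : ℕ) (F : Type*) [Field F] [Fintype F] (hq : Fintype.card F = q)
    (hprim : orderOf ((q : ZMod N)) = N - 1)
    (J : ℕ) (hJ1 : 1 ≤ J) (hJ : J ≤ N - 1) :
    (∀ t : Fin J → Fin N, Function.Injective t →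
      (Matrix.of fun p c : Fin J × Fin (N - 1) =>
        cpm F N ((p.1 : ℕ) * (t c.1 : ℕ))
          (Fin.castLE (Nat.sub_le N 1) p.2) (Fin.castLE (Nat.sub_le N 1) c.2)).det ≠ 0)
    ∧ FreeOfFourCycles (Matrix.of fun (p : Fin J × Fin (N - 1)) (c : Fin N × Fin (N - 1)) =>
        cpm F N ((p.1 : ℕ) * (c.1 : ℕ))
          (Fin.castLE (Nat.sub_le N 1) p.2) (Fin.castLE (Nat.sub_le N 1) c.2)) := by
  classical
  have hN2 : 2 ≤ N := hNp.two_le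
  have hNne2 : N ≠ 2 := by
    rintro rfl
    norm_num [Nat.odd_iff] at hNodd
  have hN3 : 3 ≤ N := by omega
  haveI : NeZero N := ⟨by omega⟩
  haveI : Fact (1 < N) := ⟨by omega⟩
  haveI : Fact N.Prime := ⟨hNp⟩
  -- `q` is a unit mod `N`
  have hqpow1 : (q : ZMod N) ^ (N - 1) = 1 := by
    rw [← hprim]; exact pow_orderOf_eq_one _
  have hq0 : (q : ZMod N) ≠ 0 := by
    intro h0
    rw [h0, zero_pow (by omega : N - 1 ≠ 0)] at hqpow1
    exact zero_ne_one hqpow1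
  -- injectivity of `Fin N → ZMod N` on values
  have hvalinj : ∀ a b : ZMod N, a.val = b.val → a = b := fun a b h => by
    rw [← ZMod.natCast_zmod_val a, ← ZMod.natCast_zmod_val b, h]
  -- powers of q mod N are distinct below N-1
  have hqpowinj : ∀ {i j : ℕ}, i < N - 1 → j < N - 1 →
      (q : ZMod N) ^ i = (q : ZMod N) ^ j → i = j := by
    have key : ∀ {i j : ℕ}, i ≤ j → j < N - 1 →
        (q : ZMod N) ^ i = (q : ZMod N) ^ j → i = j := by
      intro i j hij hj h
      have h2 : (q : ZMod N) ^ i * (q : ZMod N) ^ (j - i) = (q : ZMod N) ^ i * 1 := by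
        rw [mul_one, ← pow_add]
        rw [h]; congr 1; omega
      have h3 : (q : ZMod N) ^ (j - i) = 1 :=
        mul_left_cancel₀ (pow_ne_zero _ hq0) h2
      have h4 : (N - 1) ∣ (j - i) := hprim ▸ orderOf_dvd_of_pow_eq_one h3
      have h5 : j - i = 0 := Nat.eq_zero_of_dvd_of_lt h4 (by omega)
      omega
    intro i j hi hj h
    rcases le_total i j with hle | hle
    · exact key hle hj h
    · exact (key hle hi h.symm).symm
  constructor
  · -- part (a)
    intro t ht hdet
    obtain ⟨v, hv0, hvM⟩ := (Matrix.exists_mulVec_eq_zero_iff).mpr hdet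
    apply hv0
    -- the ambient field with a primitive N-th root of unity
    set K := AlgebraicClosure F with hK
    set alg : F →+* K := algebraMap F K with halg
    -- characteristic considerations
    obtain ⟨m, hpprime, hcardF⟩ := FiniteField.card F (ringChar F)
    haveI : CharP K (ringChar F) := charP_of_injective_algebraMap alg.injective _
    have hNK : ((N : ℕ) : K) ≠ 0 := by
      intro h0
      have hdvd : ringChar F ∣ N := (CharP.cast_eq_zero_iff K (ringChar F) N).mp h0
      have hpN : ringChar F = N := (Nat.prime_dvd_prime_iff_eq hpprime hNp).mp hdvd
      apply hq0
      rw [← hq, hcardF, hpN]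
      push_cast
      rw [ZMod.natCast_self, zero_pow (by positivity)]
    haveI : NeZero ((N : ℕ) : K) := ⟨hNK⟩
    -- a primitive N-th root of unity
    obtain ⟨ζ, hζroot⟩ := IsAlgClosed.exists_root (Polynomial.cyclotomic N K)
      (by
        have := Polynomial.degree_cyclotomic_pos N K (by omega)
        exact ne_of_gt this)
    have hζ : IsPrimitiveRoot ζ N := (Polynomial.isRoot_cyclotomic_iff).mp hζroot
    have hζN : ζ ^ N = 1 := hζ.pow_eq_one
    -- power arithmetic mod N
    have hpw : ∀ (ω : K), ω ^ N = 1 → ∀ m : ℕ, ω ^ (m % N) = ω ^ m := by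
      intro ω hω m
      conv_rhs => rw [← Nat.div_add_mod m N]
      rw [pow_add, pow_mul, hω, one_pow, one_mul]
    have hpwadd : ∀ (ω : K), ω ^ N = 1 → ∀ a b : ZMod N,
        ω ^ (a + b).val = ω ^ a.val * ω ^ b.val := by
      intro ω hω a b
      rw [ZMod.val_add, hpw ω hω, pow_add]
    -- block exponents
    set d : Fin J → Fin J → ZMod N := fun i l => (((i : ℕ) * (t l : ℕ) : ℕ) : ZMod N) with hd
    -- the component functions
    set u : Fin J → ZMod N → F := fun l s =>
      ∑ c : Fin (N - 1), if ((c : ℕ) : ZMod N) = s then v (l, c) else 0 with hu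
    -- basic equations from the kernel condition
    have hEq : ∀ (i : Fin J) (r : Fin (N - 1)),
        ∑ l : Fin J, u l (((r : ℕ) : ZMod N) + d i l) = 0 := by
      intro i r
      have h1 := congrFun hvM (i, r)
      simp only [Matrix.mulVec, dotProduct, Matrix.of_apply, cpm, Pi.zero_apply,
        Fin.coe_castLE, boole_mul] at h1
      rw [Fintype.sum_prod_type] at h1
      exact h1
    have hU0 : ∀ (i : Fin J) (s : ZMod N), s.val < N - 1 →
        ∑ l : Fin J, u l (s + d i l) = 0 := by
      intro i s hs
      have h1 := hEq i ⟨s.val, hs⟩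
      simpa [ZMod.natCast_zmod_val] using h1
    set lam : Fin J → F := fun i => ∑ l : Fin J, u l ((-1 : ZMod N) + d i l) with hlamdef
    -- polynomials
    set gp : Fin J → Polynomial F := fun l =>
      ∑ c : Fin (N - 1), Polynomial.C (v (l, c)) * Polynomial.X ^ (c : ℕ) with hgp
    have hgdeg : ∀ l, (gp l).natDegree ≤ N - 2 := by
      intro l
      apply Polynomial.natDegree_sum_le_of_forall_le
      intro c _
      exact le_trans (Polynomial.natDegree_C_mul_X_pow_le _ _) (by omega)
    have hgeval : ∀ l (ω : K), ((gp l).map alg).eval ω =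
        ∑ c : Fin (N - 1), alg (v (l, c)) * ω ^ (c : ℕ) := by
      intro l ω
      rw [Polynomial.eval_map, hgp]
      rw [Polynomial.eval₂_finset_sum]
      congr 1
      ext c
      simp [Polynomial.eval₂_mul, Polynomial.eval₂_C, Polynomial.eval₂_X_pow]
    -- the Fourier computation for a single block column
    have hfour : ∀ (ω : K), ω ^ N = 1 → ∀ (l : Fin J) (dd : ZMod N),
        ∑ s : ZMod N, ω ^ s.val * alg (u l (s + dd)) =
          ω ^ (-dd).val * ((gp l).map alg).eval ω := by
      intro ω hω l dd
      have step1 : ∑ s : ZMod N, ω ^ s.val * alg (u l (s + dd)) =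
          ∑ y : ZMod N, ω ^ (y + (-dd)).val * alg (u l y) := by
        apply Fintype.sum_equiv (Equiv.addRight dd)
        intro s
        simp only [Equiv.coe_addRight]
        congr 2
        · congr 1
          ring
      rw [step1]
      have step2 : ∑ y : ZMod N, ω ^ (y + (-dd)).val * alg (u l y) =
          ω ^ (-dd).val * ∑ y : ZMod N, ω ^ y.val * alg (u l y) := by
        rw [Finset.mul_sum]
        congr 1
        ext y
        rw [hpwadd ω hω]
        ring
      rw [step2]
      congr 1
      -- ∑ y, ω ^ y.val * alg (u l y) = eval ω (gp l)
      rw [hgeval, hu]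
      simp only [map_sum, Finset.mul_sum]
      rw [Finset.sum_comm]
      congr 1
      ext c
      rw [Finset.sum_eq_single (((c : ℕ) : ZMod N))]
      · rw [apply_ite alg, if_pos rfl,
          ZMod.val_cast_of_lt (lt_of_lt_of_le c.isLt (by omega))]
        ring
      · intro y _ hy
        rw [apply_ite alg, map_zero, if_neg (fun h => hy h.symm), mul_zero]
      · intro hmem
        exact absurd (Finset.mem_univ _) hmem
    -- master identity
    have hMI : ∀ (i : Fin J) (ω : K), ω ^ N = 1 →
        ∑ l : Fin J, ω ^ ((-(d i l)).val) * ((gp l).map alg).eval ω =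
          ω ^ (N - 1) * alg (lam i) := by
      intro i ω hω
      have hsplit : ∑ s : ZMod N, ω ^ s.val * alg (∑ l : Fin J, u l (s + d i l)) =
          ω ^ (N - 1) * alg (lam i) := by
        rw [Finset.sum_eq_single (-1 : ZMod N)]
        · congr 1
          obtain ⟨n, rfl⟩ : ∃ n, N = n + 1 := ⟨N - 1, by omega⟩
          rw [ZMod.val_neg_one]
          simp
        · intro s _ hs
          have hsval : s.val < N - 1 := by
            have h1 : s.val < N := ZMod.val_lt s
            have h2 : s.val ≠ N - 1 := by
              intro hcon
              apply hs
              apply hvalinj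
              rw [hcon]
              obtain ⟨n, rfl⟩ : ∃ n, N = n + 1 := ⟨N - 1, by omega⟩
              rw [ZMod.val_neg_one]
              simp
            omega
          rw [hU0 i s hsval, map_zero, mul_zero]
        · intro hmem
          exact absurd (Finset.mem_univ _) hmem
      calc ∑ l : Fin J, ω ^ ((-(d i l)).val) * ((gp l).map alg).eval ω
          = ∑ l : Fin J, ∑ s : ZMod N, ω ^ s.val * alg (u l (s + d i l)) := by
            congr 1; ext l; rw [hfour ω hω]
        _ = ∑ s : ZMod N, ω ^ s.val * alg (∑ l : Fin J, u l (s + d i l)) := by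
            rw [Finset.sum_comm]
            congr 1; ext s
            rw [map_sum, Finset.mul_sum]
        _ = ω ^ (N - 1) * alg (lam i) := hsplit
    -- lam is independent of i
    have hlamconst : ∀ i : Fin J, alg (lam i) = ∑ l : Fin J, ((gp l).map alg).eval 1 := by
      intro i
      have h1 := hMI i 1 (one_pow N)
      simpa using h1.symm
    set i₀ : Fin J := ⟨0, by omega⟩ with hi₀
    have hd0 : ∀ l, d i₀ l = 0 := by
      intro l
      rw [hd]
      simp [hi₀]
    -- h' polynomial
    set G' : Polynomial F := ∑ l : Fin J, gp l with hG'
    set h' : Polynomial F := Polynomial.X * G' - Polynomial.C (lam i₀) with hh'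
    have hGeval : ∀ ω : K, (G'.map alg).eval ω = ∑ l : Fin J, ((gp l).map alg).eval ω := by
      intro ω
      rw [hG', Polynomial.map_sum]
      simp [Polynomial.eval_finset_sum]
    have hh'eval : ∀ ω : K, (h'.map alg).eval ω =
        ω * (G'.map alg).eval ω - alg (lam i₀) := by
      intro ω
      rw [hh']
      simp [Polynomial.map_sub, Polynomial.map_mul]
    -- roots of h'
    have hh'1 : (h'.map alg).eval 1 = 0 := by
      rw [hh'eval, hGeval, one_mul, ← hlamconst i₀, sub_self]
    have hh'ζ : (h'.map alg).eval ζ = 0 := by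
      rw [hh'eval, hGeval]
      have h1 := hMI i₀ ζ hζN
      simp only [hd0, neg_zero, ZMod.val_zero, pow_zero, one_mul] at h1
      rw [h1]
      have hmul : ζ * ζ ^ (N - 1) = 1 := by
        have h2 : ζ ^ (N - 1 + 1) = ζ * ζ ^ (N - 1) := pow_succ' ζ (N - 1)
        rw [← h2, show N - 1 + 1 = N by omega, hζN]
      calc ζ * (ζ ^ (N - 1) * alg (lam i₀)) - alg (lam i₀)
          = (ζ * ζ ^ (N - 1)) * alg (lam i₀) - alg (lam i₀) := by ring
        _ = 0 := by rw [hmul, one_mul, sub_self]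
    -- Frobenius orbit of roots
    have hfrobroots : ∀ P : Polynomial F, (P.map alg).eval ζ = 0 →
        ∀ j : ℕ, (P.map alg).eval (ζ ^ (q ^ j)) = 0 := by
      intro P h0 j
      induction j with
      | zero => simpa using h0
      | succ j ih =>
        have h2 := frob_step P (ζ ^ (q ^ j)) ih
        rw [hq, ← pow_mul, ← pow_succ] at h2
        exact h2
    have hwq : ∀ j : ℕ, ζ ^ (((q : ZMod N) ^ j).val) = ζ ^ (q ^ j) := by
      intro j
      have : ((q : ZMod N) ^ j) = ((q ^ j : ℕ) : ZMod N) := by push_cast; ring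
      rw [this, ZMod.val_natCast, hpw ζ hζN]
    -- the root sets
    set QT : Finset (ZMod N) := (Finset.range (N - 1)).image (fun j => (q : ZMod N) ^ j)
      with hQT
    have hQTcard : QT.card = N - 1 := by
      rw [hQT, Finset.card_image_of_injOn, Finset.card_range]
      intro i hi j hj hij
      simp only [Finset.coe_range, Set.mem_Iio] at hi hj
      exact hqpowinj hi hj hij
    have hQT0 : (0 : ZMod N) ∉ QT := by
      rw [hQT]
      simp only [Finset.mem_image, Finset.mem_range, not_exists]
      rintro j ⟨_, hj⟩
      exact pow_ne_zero _ hq0 hj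
    have hKR : ∀ P : Polynomial F, (P.map alg).eval ζ = 0 →
        ∀ x ∈ QT, (P.map alg).eval (ζ ^ x.val) = 0 := by
      intro P h0 x hx
      rw [hQT] at hx
      obtain ⟨j, _, rfl⟩ := Finset.mem_image.mp hx
      rw [hwq j]
      exact hfrobroots P h0 j
    -- injectivity of x ↦ ζ ^ x.val
    have hwinj : Set.InjOn (fun x : ZMod N => ζ ^ x.val) ↑(Finset.univ : Finset (ZMod N)) := by
      intro a _ b _ hab
      exact hvalinj a b (hζ.pow_inj (ZMod.val_lt a) (ZMod.val_lt b) hab)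
    -- main vanishing lemma for degree ≤ N-2
    have hVZ : ∀ P : Polynomial F, P.natDegree ≤ N - 2 → (P.map alg).eval ζ = 0 → P = 0 := by
      intro P hdeg h0
      have hmap0 : P.map alg = 0 := by
        apply Polynomial.eq_zero_of_natDegree_lt_card_of_eval_eq_zero' (P.map alg)
          (QT.image (fun x => ζ ^ x.val))
        · intro x hx
          obtain ⟨y, hy, rfl⟩ := Finset.mem_image.mp hx
          exact hKR P h0 y hy
        · rw [Finset.card_image_of_injOn (fun a _ b _ h => hwinj (Finset.mem_coe.mpr
            (Finset.mem_univ a)) (Finset.mem_coe.mpr (Finset.mem_univ b)) h), hQTcard]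
          calc (P.map alg).natDegree ≤ P.natDegree := Polynomial.natDegree_map_le
            _ ≤ N - 2 := hdeg
            _ < N - 1 := by omega
      exact (Polynomial.map_eq_zero_iff alg.injective).mp hmap0
    -- h' = 0, so lam i₀ = 0
    have hh'0 : h' = 0 := by
      have hmap0 : h'.map alg = 0 := by
        apply Polynomial.eq_zero_of_natDegree_lt_card_of_eval_eq_zero' (h'.map alg)
          (insert (1 : K) (QT.image (fun x => ζ ^ x.val)))
        · intro x hx
          rcases Finset.mem_insert.mp hx with rfl | hx
          · exact hh'1
          · obtain ⟨y, hy, rfl⟩ := Finset.mem_image.mp hx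
            exact hKR h' hh'ζ y hy
        · have hnotmem : (1 : K) ∉ QT.image (fun x => ζ ^ x.val) := by
            intro hmem
            obtain ⟨y, hy, hy1⟩ := Finset.mem_image.mp hmem
            have : y = 0 := by
              apply hvalinj
              have : ζ ^ y.val = ζ ^ (0 : ZMod N).val := by
                rw [hy1]
                simp [ZMod.val_zero]
              exact hζ.pow_inj (ZMod.val_lt y) (ZMod.val_lt 0) this
            exact hQT0 (this ▸ hy)
          rw [Finset.card_insert_of_notMem hnotmem,
            Finset.card_image_of_injOn (fun a _ b _ h => hwinj (Finset.mem_coe.mpr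
              (Finset.mem_univ a)) (Finset.mem_coe.mpr (Finset.mem_univ b)) h), hQTcard]
          have hdegh' : h'.natDegree ≤ N - 1 := by
            rw [hh']
            apply le_trans (Polynomial.natDegree_sub_le _ _)
            apply max_le
            · apply le_trans (Polynomial.natDegree_mul_le)
              have hGdeg : G'.natDegree ≤ N - 2 := by
                apply Polynomial.natDegree_sum_le_of_forall_le
                intro l _
                exact hgdeg l
              calc Polynomial.X.natDegree + G'.natDegree ≤ 1 + (N - 2) := by
                    exact add_le_add Polynomial.natDegree_X_le hGdeg
                _ ≤ N - 1 := by omega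
            · simp
          calc (h'.map alg).natDegree ≤ h'.natDegree := Polynomial.natDegree_map_le
            _ ≤ N - 1 := hdegh'
            _ < N - 1 + 1 := by omega
      exact (Polynomial.map_eq_zero_iff alg.injective).mp hmap0
    have hlam0 : lam i₀ = 0 := by
      have h1 := congrArg (fun p => Polynomial.coeff p 0) hh'0
      simp only [hh', Polynomial.coeff_sub, Polynomial.mul_coeff_zero,
        Polynomial.coeff_X_zero, zero_mul, Polynomial.coeff_C_zero, Polynomial.coeff_zero,
        zero_sub, neg_eq_zero] at h1
      exact h1
    have hlamall : ∀ i, alg (lam i) = 0 := by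
      intro i
      rw [hlamconst i, ← hlamconst i₀, hlam0, map_zero]
    -- the Vandermonde system
    set z : Fin J → K := fun l => ζ ^ ((-(((t l : ℕ) : ZMod N))).val) with hz
    have hwmul : ∀ (n : ℕ) (a : ZMod N), ζ ^ ((((n : ℕ) : ZMod N)) * a).val = (ζ ^ a.val) ^ n := by
      intro n a
      induction n with
      | zero => simp [ZMod.val_zero]
      | succ n ih =>
        have : (((n + 1 : ℕ) : ZMod N)) * a = ((n : ℕ) : ZMod N) * a + a := by
          push_cast; ring
        rw [this, hpwadd ζ hζN, ih, pow_succ]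
    have hzpow : ∀ (i : Fin J) (l : Fin J), ζ ^ ((-(d i l)).val) = z l ^ (i : ℕ) := by
      intro i l
      have heq : -(d i l) = (((i : ℕ) : ZMod N)) * (-(((t l : ℕ) : ZMod N))) := by
        rw [hd]
        push_cast
        ring
      rw [heq, hwmul, hz]
    have hsys : ∀ i : Fin J, ∑ l : Fin J, z l ^ (i : ℕ) * ((gp l).map alg).eval ζ = 0 := by
      intro i
      have h1 := hMI i ζ hζN
      rw [hlamall i, mul_zero] at h1
      calc ∑ l : Fin J, z l ^ (i : ℕ) * ((gp l).map alg).eval ζ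
          = ∑ l : Fin J, ζ ^ ((-(d i l)).val) * ((gp l).map alg).eval ζ := by
            congr 1; ext l; rw [hzpow]
        _ = 0 := h1
    have hzinj : Function.Injective z := by
      intro l1 l2 h12
      have hval : (-(((t l1 : ℕ) : ZMod N))).val = (-(((t l2 : ℕ) : ZMod N))).val :=
        hζ.pow_inj (ZMod.val_lt _) (ZMod.val_lt _) h12
      have h2 : -(((t l1 : ℕ) : ZMod N)) = -(((t l2 : ℕ) : ZMod N)) := hvalinj _ _ hval
      have h3 : (((t l1 : ℕ) : ZMod N)) = (((t l2 : ℕ) : ZMod N)) := neg_injective h2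
      have h4 : (t l1 : ℕ) = (t l2 : ℕ) := by
        have := congrArg ZMod.val h3
        rwa [ZMod.val_cast_of_lt (t l1).isLt, ZMod.val_cast_of_lt (t l2).isLt] at this
      exact ht (Fin.val_injective h4)
    -- conclude eval ζ (gp l) = 0 for all l
    have haz : (fun l => ((gp l).map alg).eval ζ) = 0 := by
      have hW : ((Matrix.vandermonde z).transpose).mulVec (fun l => ((gp l).map alg).eval ζ) = 0 := by
        funext i
        simpa [Matrix.mulVec, dotProduct, Matrix.vandermonde] using hsys i
      apply Matrix.eq_zero_of_mulVec_eq_zero _ hW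
      rw [Matrix.det_transpose]
      exact Matrix.det_vandermonde_ne_zero_iff.mpr hzinj
    have hgp0 : ∀ l, gp l = 0 := by
      intro l
      exact hVZ (gp l) (hgdeg l) (congrFun haz l)
    -- extract the coefficients
    funext x
    obtain ⟨l, c⟩ := x
    have hcoeff : (gp l).coeff (c : ℕ) = v (l, c) := by
      rw [hgp]
      rw [Polynomial.finset_sum_coeff]
      rw [Finset.sum_eq_single c]
      · simp [Polynomial.coeff_C_mul, Polynomial.coeff_X_pow]
      · intro c' _ hc'
        simp only [Polynomial.coeff_C_mul, Polynomial.coeff_X_pow]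
        rw [if_neg (fun h => hc' (Fin.val_injective h.symm))]
        simp
      · intro hmem
        exact absurd (Finset.mem_univ _) hmem
    rw [hgp0 l] at hcoeff
    simp only [Polynomial.coeff_zero] at hcoeff
    exact hcoeff.symm ▸ rfl
  · -- part (b): free of 4-cycles
    rintro ⟨⟨i1, r1⟩, ⟨i2, r2⟩, ⟨j1, c1⟩, ⟨j2, c2⟩, hrow, hcol, h11, h12, h21, h22⟩
    simp only [Matrix.of_apply, cpm, Fin.coe_castLE, ne_eq, ite_eq_right_iff,
      one_ne_zero, imp_false, not_not, Classical.not_imp] at h11 h12 h21 h22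
    -- the four congruences
    have e1 : ((c1 : ℕ) : ZMod N) = ((r1 : ℕ) : ZMod N) + ((i1 : ℕ) : ZMod N) * ((j1 : ℕ) : ZMod N) := by
      rw [h11]; push_cast; ring
    have e2 : ((c2 : ℕ) : ZMod N) = ((r1 : ℕ) : ZMod N) + ((i1 : ℕ) : ZMod N) * ((j2 : ℕ) : ZMod N) := by
      rw [h12]; push_cast; ring
    have e3 : ((c1 : ℕ) : ZMod N) = ((r2 : ℕ) : ZMod N) + ((i2 : ℕ) : ZMod N) * ((j1 : ℕ) : ZMod N) := by
      rw [h21]; push_cast; ring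
    have e4 : ((c2 : ℕ) : ZMod N) = ((r2 : ℕ) : ZMod N) + ((i2 : ℕ) : ZMod N) * ((j2 : ℕ) : ZMod N) := by
      rw [h22]; push_cast; ring
    haveI : Fact N.Prime := ⟨hNp⟩
    -- case on whether i1 = i2 in ZMod N
    set I1 : ZMod N := ((i1 : ℕ) : ZMod N)
    set I2 : ZMod N := ((i2 : ℕ) : ZMod N)
    set R1 : ZMod N := ((r1 : ℕ) : ZMod N)
    set R2 : ZMod N := ((r2 : ℕ) : ZMod N)
    set Z1 : ZMod N := ((j1 : ℕ) : ZMod N)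
    set Z2 : ZMod N := ((j2 : ℕ) : ZMod N)
    have key1 : (I1 - I2) * Z1 = R2 - R1 := by
      have := e1.symm.trans e3
      linear_combination this
    have key2 : (I1 - I2) * Z2 = R2 - R1 := by
      have := e2.symm.trans e4
      linear_combination this
    by_cases hii : I1 = I2
    · -- rows in same block row: r1 = r2, contradiction with hrow
      have hi12 : i1 = i2 := by
        apply Fin.val_injective
        have h1 := congrArg ZMod.val hii
        rwa [ZMod.val_cast_of_lt (by omega : (i1 : ℕ) < N),
          ZMod.val_cast_of_lt (by omega : (i2 : ℕ) < N)] at h1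
      have hr12 : R1 = R2 := by
        have h0 : (0 : ZMod N) = R2 - R1 := by rw [← key1, hii]; ring
        linear_combination h0
      have hr : r1 = r2 := by
        apply Fin.val_injective
        have h1 := congrArg ZMod.val hr12
        rwa [ZMod.val_cast_of_lt (by omega : (r1 : ℕ) < N),
          ZMod.val_cast_of_lt (by omega : (r2 : ℕ) < N)] at h1
      exact hrow (by rw [hi12, hr])
    · -- different block rows: j1 = j2 and c1 = c2, contradiction with hcol
      have hIne : I1 - I2 ≠ 0 := fun h => hii (by linear_combination h)
      have hZ : Z1 = Z2 := by
        have := key1.trans key2.symm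
        exact mul_left_cancel₀ hIne this
      have hj12 : j1 = j2 := by
        apply Fin.val_injective
        have h1 := congrArg ZMod.val hZ
        rwa [ZMod.val_cast_of_lt j1.isLt, ZMod.val_cast_of_lt j2.isLt] at h1
      have hC : ((c1 : ℕ) : ZMod N) = ((c2 : ℕ) : ZMod N) := by
        rw [e1, e2, hZ]
      have hc12 : c1 = c2 := by
        apply Fin.val_injective
        have h1 := congrArg ZMod.val hC
        rwa [ZMod.val_cast_of_lt (by omega : (c1 : ℕ) < N),
          ZMod.val_cast_of_lt (by omega : (c2 : ℕ) < N)] at h1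
      exact hcol (by rw [hj12, hc12])
end

section
/- Let N be an odd prime, q a prime power, and 1 ≤ r ≤ N. The rN × N² matrix over F_q whose (i, j) block (i ∈ [r], j ∈ [N]) is the circulant permutation matrix P_N^{(i−1)(j−1) mod N} (the Vandermonde-type matrix V(I_N, P_N, …, P_N^{N−1}; r)) is free of 4-cycles. -/
/-- **(Fan).**  Let `N` be an odd prime, `q` a prime power (realized as the cardinality
of the finite field `F`), and `1 ≤ r ≤ N`.  The Vandermonde-type `rN × N²` matrix
`V(I_N, P_N, …, P_N^{N-1}; r)` over `F`, whose `(i, j)` block is the circulant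
permutation matrix `P_N ^ ((i-1)(j-1) mod N)`, is free of 4-cycles. -/
theorem vandermonde_cpm_free_of_four_cycles
    (N : ℕ) (hNp : N.Prime) (hNodd : Odd N)
    (q : ℕ) (F : Type*) [Field F] [Fintype F] (hq : Fintype.card F = q)
    (r : ℕ) (hr : 1 ≤ r) (hrN : r ≤ N) :
    FreeOfFourCycles (Matrix.of fun (p : Fin r × Fin N) (c : Fin N × Fin N) =>
      cpm F N ((p.1 : ℕ) * (c.1 : ℕ)) p.2 c.2) := by
  haveI : Fact N.Prime := ⟨hNp⟩
  rintro ⟨⟨i1, a1⟩, ⟨i2, a2⟩, ⟨j1, b1⟩, ⟨j2, b2⟩, hrow, hcol, h11, h12, h21, h22⟩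
  have inj : ∀ a b : ℕ, a < N → b < N → ((a : ZMod N) = (b : ZMod N)) → a = b := by
    intro a b ha hb h
    rwa [ZMod.natCast_eq_natCast_iff, Nat.ModEq, Nat.mod_eq_of_lt ha,
      Nat.mod_eq_of_lt hb] at h
  have key : ∀ (i : Fin r) (j a b : Fin N),
      (cpm F N ((i : ℕ) * (j : ℕ)) a b : F) ≠ 0 →
      ((b : ℕ) : ZMod N) = ((a : ℕ) : ZMod N) + ((i : ℕ) : ZMod N) * ((j : ℕ) : ZMod N) := by
    intro i j a b h
    simp only [cpm, Matrix.of_apply, ne_eq, ite_eq_right_iff, one_ne_zero, imp_false,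
      not_not] at h
    rw [h]; push_cast; ring
  have e11 := key i1 j1 a1 b1 h11
  have e12 := key i1 j2 a1 b2 h12
  have e21 := key i2 j1 a2 b1 h21
  have e22 := key i2 j2 a2 b2 h22
  by_cases hi : i1 = i2
  · subst hi
    have ha : ((a1 : ℕ) : ZMod N) = ((a2 : ℕ) : ZMod N) := by
      have := e11.symm.trans e21
      exact add_right_cancel this
    have : a1 = a2 := Fin.ext (inj _ _ a1.isLt a2.isLt ha)
    exact hrow (by rw [this])
  · have hi' : ((i1 : ℕ) : ZMod N) ≠ ((i2 : ℕ) : ZMod N) := by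
      intro h
      exact hi (Fin.ext (inj _ _ (lt_of_lt_of_le i1.isLt hrN)
        (lt_of_lt_of_le i2.isLt hrN) h))
    -- From the four equations derive (i1 - i2)(j1 - j2) = 0
    have h1 : ((a1 : ℕ) : ZMod N) + ((i1 : ℕ) : ZMod N) * ((j1 : ℕ) : ZMod N)
        = ((a2 : ℕ) : ZMod N) + ((i2 : ℕ) : ZMod N) * ((j1 : ℕ) : ZMod N) :=
      e11.symm.trans e21
    have h2 : ((a1 : ℕ) : ZMod N) + ((i1 : ℕ) : ZMod N) * ((j2 : ℕ) : ZMod N)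
        = ((a2 : ℕ) : ZMod N) + ((i2 : ℕ) : ZMod N) * ((j2 : ℕ) : ZMod N) :=
      e12.symm.trans e22
    have hprod : (((i1 : ℕ) : ZMod N) - ((i2 : ℕ) : ZMod N))
        * (((j1 : ℕ) : ZMod N) - ((j2 : ℕ) : ZMod N)) = 0 := by
      have := congrArg₂ (· - ·) h1 h2
      ring_nf at this ⊢
      linear_combination this
    rcases mul_eq_zero.mp hprod with h | h
    · exact hi' (sub_eq_zero.mp h)
    · have hj : j1 = j2 := Fin.ext (inj _ _ j1.isLt j2.isLt (sub_eq_zero.mp h))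
      subst hj
      have hb : b1 = b2 := Fin.ext (inj _ _ b1.isLt b2.isLt (e11.trans e12.symm))
      exact hcol (by rw [hb])
end

section
/- Let N be an odd prime, let q be a prime power with gcd(q, N) = 1, and let 1 ≤ r ≤ N. The rN × N² matrix V over F_q whose (i, j) block (i ∈ [r], j ∈ [N]) is the circulant permutation matrix P_N^{(i−1)(j−1) mod N} has rank Nr − r + 1 over F_q. -/
open Finset Matrix

section CharTransform

variable {R K : Type*} [CommRing R] [Fintype R] [Field K] (ψ : AddChar R K)

def charTransform (g : R → K) (t : R) : K := ∑ u, ψ (t * u) * g u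

lemma charTransform_sum {ι : Type*} (s : Finset ι) (g : ι → R → K) (t : R) :
    charTransform ψ (fun y => ∑ i ∈ s, g i y) t = ∑ i ∈ s, charTransform ψ (g i) t := by
  simp only [charTransform, mul_sum]
  exact sum_comm

lemma charTransform_comp_sub (g : R → K) (s t : R) :
    charTransform ψ (fun y => g (y - s)) t = ψ (t * s) * charTransform ψ g t := by
  rw [charTransform, charTransform, mul_sum]
  refine Fintype.sum_equiv (Equiv.subRight s) _ _ fun y => ?_
  rw [Equiv.subRight_apply, ← mul_assoc, ← AddChar.map_add_eq_mul, ← mul_add, add_sub_cancel]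

variable [DecidableEq R] {ψ} (hψ : ψ.IsPrimitive)
include hψ

lemma sum_char_neg_mul_charTransform (g : R → K) (v : R) :
    ∑ t, ψ (-(t * v)) * charTransform ψ g t = Fintype.card R * g v := by
  calc ∑ t, ψ (-(t * v)) * charTransform ψ g t
      = ∑ u, (∑ t, ψ (t * (u - v))) * g u := by
        simp only [charTransform, mul_sum, sum_mul]
        rw [sum_comm]
        refine sum_congr rfl fun u _ => sum_congr rfl fun t _ => ?_
        rw [← mul_assoc, ← AddChar.map_add_eq_mul, mul_sub, neg_add_eq_sub]
    _ = Fintype.card R * g v := by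
        rw [sum_congr rfl fun u _ => by rw [AddChar.sum_mulShift _ hψ]]
        simp [sub_eq_zero]

lemma eq_of_charTransform_eq_zero (hR : (Fintype.card R : K) ≠ 0) {g : R → K}
    (h : ∀ t ≠ 0, charTransform ψ g t = 0) (u v : R) : g u = g v := by
  have inversion (w : R) : Fintype.card R * g w = charTransform ψ g 0 := by
    rw [← sum_char_neg_mul_charTransform hψ,
      sum_eq_single 0 (fun t _ ht => by rw [h t ht, mul_zero]) (fun h0 => (h0 (mem_univ 0)).elim)]
    simp
  exact mul_left_cancel₀ hR ((inversion u).trans (inversion v).symm)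

lemma eq_zero_of_forall_sum_char_mul_eq_zero (hR : (Fintype.card R : K) ≠ 0) {ι : Type*}
    [Fintype ι] {a : ι → R} (ha : Function.Injective a) {w : ι → K}
    (h : ∀ x, ∑ i, ψ (a i * x) * w i = 0) (i : ι) : w i = 0 := by
  have : ∑ x, ψ (-(a i * x)) * ∑ j, ψ (a j * x) * w j = Fintype.card R * w i := by
    calc ∑ x, ψ (-(a i * x)) * ∑ j, ψ (a j * x) * w j
        = ∑ j, (∑ x, ψ (x * (a j - a i))) * w j := by
          simp only [mul_sum, sum_mul]
          rw [sum_comm]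
          refine sum_congr rfl fun j _ => sum_congr rfl fun x _ => ?_
          rw [← mul_assoc, ← AddChar.map_add_eq_mul]
          ring_nf
      _ = Fintype.card R * w i := by
          rw [sum_congr rfl fun j _ => by rw [AddChar.sum_mulShift _ hψ],
            sum_eq_single i (fun j _ hj => by rw [if_neg (sub_ne_zero.2 (ha.ne hj))]; simp)
              (fun hi => (hi (mem_univ i)).elim)]
          simp
  simp only [h, mul_zero, sum_const_zero] at this
  exact (mul_eq_zero.1 this.symm).resolve_left hR

end CharTransform

lemma natCast_ne_zero_of_coprime_card {F : Type*} [Field F] [Fintype F] {N : ℕ}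
    (h : Nat.Coprime (Fintype.card F) N) : (N : F) ≠ 0 := by
  intro hN
  rw [CharP.cast_eq_zero_iff F (ringChar F)] at hN
  have hcard := (CharP.cast_eq_zero_iff F (ringChar F) _).1 (FiniteField.cast_card_eq_zero F)
  exact CharP.ringChar_ne_one (Nat.eq_one_of_dvd_coprimes h hcard hN)

section FiniteField

variable {R : Type*} [Field R] [Fintype R]

lemma ringChar_ne_of_card_cast_ne_zero {F : Type*} [Field F] (hR : (Fintype.card R : F) ≠ 0) :
    ringChar F ≠ ringChar R := by
  intro hchar
  apply hR
  rw [CharP.cast_eq_zero_iff F (ringChar F), hchar, ← CharP.cast_eq_zero_iff R]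
  exact FiniteField.cast_card_eq_zero R

variable [DecidableEq R] {K : Type*} [Field K] {ψ : AddChar R K}

lemma eq_of_forall_sum_sub_mul_eq_zero_of_isPrimitive (hψ : ψ.IsPrimitive)
    (hR : (Fintype.card R : K) ≠ 0) {ι : Type*} [Fintype ι] {a : ι → R}
    (ha : Function.Injective a) {g : ι → R → K} (h : ∀ x y, ∑ i, g i (y - a i * x) = 0)
    (i : ι) (u v : R) : g i u = g i v := by
  refine eq_of_charTransform_eq_zero hψ hR (fun t ht => ?_) u v
  refine eq_zero_of_forall_sum_char_mul_eq_zero hψ hR ((mul_right_injective₀ ht).comp ha)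
    (w := fun j => charTransform ψ (g j) t) (fun x => ?_) i
  have := congrArg (fun f => charTransform ψ f t) (funext (h x))
  simp only [charTransform_sum, charTransform_comp_sub] at this
  simpa [charTransform, mul_assoc] using this

lemma eq_of_forall_sum_sub_mul_eq_zero {F : Type*} [Field F] (hR : (Fintype.card R : F) ≠ 0)
    {ι : Type*} [Fintype ι] {a : ι → R} (ha : Function.Injective a) {g : ι → R → F}
    (h : ∀ x y, ∑ i, g i (y - a i * x) = 0) (i : ι) (u v : R) : g i u = g i v := by
  let ψ := AddChar.FiniteField.primitiveChar R F (ringChar_ne_of_card_cast_ne_zero hR)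
  let emb := algebraMap F (CyclotomicField ψ.n F)
  refine emb.injective (eq_of_forall_sum_sub_mul_eq_zero_of_isPrimitive ψ.prim
    (by rwa [← map_natCast emb, map_ne_zero]) ha (g := fun i z => emb (g i z))
    (fun x y => by rw [← map_sum, h x y, map_zero]) i u v)

end FiniteField

def finEquivZMod (N : ℕ) [NeZero N] : Fin N ≃ ZMod N where
  toFun a := ((a : ℕ) : ZMod N)
  invFun z := ⟨z.val, z.val_lt⟩
  left_inv a := Fin.ext (ZMod.val_natCast_of_lt a.isLt)
  right_inv z := ZMod.natCast_zmod_val z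

lemma finEquivZMod_apply {N : ℕ} [NeZero N] (a : Fin N) :
    finEquivZMod N a = ((a : ℕ) : ZMod N) := rfl

section Circulant

variable {F : Type*} [Semiring F] {N : ℕ} [NeZero N]

lemma vecMul_cpm (f : Fin N → F) (k : ℕ) (b : Fin N) :
    (f ᵥ* cpm F N k) b = f ((finEquivZMod N).symm (finEquivZMod N b - k)) := by
  set e := finEquivZMod N
  have hcond (a : Fin N) :
      ((b : ℕ) : ZMod N) = ((a : ℕ) : ZMod N) + k ↔ a = e.symm (e b - k) := by
    rw [e.eq_symm_apply, eq_sub_iff_add_eq, eq_comm]; rfl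
  simp only [Matrix.vecMul, dotProduct, cpm, Matrix.of_apply, hcond, mul_ite, mul_one, mul_zero,
    sum_ite_eq', mem_univ, if_true]

variable (F N) in
def vandermondeCPM (r : ℕ) : Matrix (Fin r × Fin N) (Fin N × Fin N) F :=
  Matrix.of fun p c => cpm F N ((p.1 : ℕ) * (c.1 : ℕ)) p.2 c.2

lemma vecMul_vandermondeCPM {r : ℕ} (c : Fin r × Fin N → F) (j b : Fin N) :
    (c ᵥ* vandermondeCPM F N r) (j, b) =
      ∑ i : Fin r, c (i, (finEquivZMod N).symm
        (finEquivZMod N b - ((i : ℕ) : ZMod N) * finEquivZMod N j)) := by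
  simp only [Matrix.vecMul, dotProduct, Fintype.sum_prod_type]
  refine sum_congr rfl fun i _ => ?_
  rw [finEquivZMod_apply j, ← Nat.cast_mul]
  exact vecMul_cpm (fun a => c (i, a)) ((i : ℕ) * (j : ℕ)) b

end Circulant

lemma finrank_ker_linearCombination_one {F : Type*} [Field F] {r : ℕ} (hr : 1 ≤ r) :
    Module.finrank F (LinearMap.ker (Fintype.linearCombination F (1 : Fin r → F))) = r - 1 := by
  have hne : Fintype.linearCombination F (1 : Fin r → F) ≠ 0 := fun h => by
    simpa [Fintype.linearCombination_apply] using LinearMap.congr_fun h (Pi.single ⟨0, hr⟩ 1)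
  have := Module.Dual.finrank_ker_add_one_of_ne_zero hne
  rw [Module.finrank_fin_fun] at this
  omega

lemma natCast_fin_injective {N r : ℕ} (hrN : r ≤ N) :
    Function.Injective fun i : Fin r => ((i : ℕ) : ZMod N) := fun i j h => Fin.ext <| by
  simpa [ZMod.val_natCast_of_lt (i.2.trans_le hrN), ZMod.val_natCast_of_lt (j.2.trans_le hrN)]
    using congrArg ZMod.val h

lemma ker_mulVecLin_transpose_vandermondeCPM {F : Type*} [Field F] {N r : ℕ} (hN : N.Prime)
    (hNF : (N : F) ≠ 0) (hrN : r ≤ N) :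
    LinearMap.ker (vandermondeCPM F N r)ᵀ.mulVecLin =
      (LinearMap.ker (Fintype.linearCombination F (1 : Fin r → F))).map
        (LinearMap.funLeft F F Prod.fst) := by
  have := Fact.mk hN
  set e := finEquivZMod N with he
  ext c
  have hker : c ᵥ* vandermondeCPM F N r = 0 ↔
      ∀ x y : ZMod N, ∑ i : Fin r, c (i, e.symm (y - ((i : ℕ) : ZMod N) * x)) = 0 := by
    simp only [funext_iff, Prod.forall, vecMul_vandermondeCPM, Pi.zero_apply, ← he,
      e.forall_congr_left, Equiv.apply_symm_apply]
  simp only [LinearMap.mem_ker, mulVecLin_apply, mulVec_transpose, hker, Submodule.mem_map,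
    Fintype.linearCombination_apply, Pi.one_apply, smul_eq_mul, mul_one]
  constructor
  · intro h
    have hconst := eq_of_forall_sum_sub_mul_eq_zero (by rwa [ZMod.card]) (natCast_fin_injective hrN)
      (g := fun i z => c (i, e.symm z)) h
    refine ⟨fun i => c (i, e.symm 0), by simpa using h 0 0, ?_⟩
    funext ⟨i, a⟩
    simpa using hconst i 0 (e a)
  · rintro ⟨d, hd, rfl⟩ x y
    exact hd

lemma finrank_ker_mulVecLin_transpose_vandermondeCPM {F : Type*} [Field F] {N r : ℕ}
    (hN : N.Prime) (hNF : (N : F) ≠ 0) (hr : 1 ≤ r) (hrN : r ≤ N) :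
    Module.finrank F (LinearMap.ker (vandermondeCPM F N r)ᵀ.mulVecLin) = r - 1 := by
  have : NeZero N := ⟨hN.ne_zero⟩
  rw [ker_mulVecLin_transpose_vandermondeCPM hN hNF hrN,
    ← finrank_ker_linearCombination_one (F := F) hr]
  exact (Submodule.equivMapOfInjective _ (LinearMap.funLeft_injective_of_surjective F F _
    Prod.fst_surjective) _).finrank_eq.symm

lemma rank_vandermondeCPM {F : Type*} [Field F] {N r : ℕ} (hN : N.Prime) (hNF : (N : F) ≠ 0)
    (hr : 1 ≤ r) (hrN : r ≤ N) : (vandermondeCPM F N r).rank = N * r - r + 1 := by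
  have hrank := LinearMap.finrank_range_add_finrank_ker (vandermondeCPM F N r)ᵀ.mulVecLin
  rw [finrank_ker_mulVecLin_transpose_vandermondeCPM hN hNF hr hrN,
    Module.finrank_fintype_fun_eq_card, Fintype.card_prod, Fintype.card_fin, Fintype.card_fin,
    ← Matrix.rank, rank_transpose, Nat.mul_comm] at hrank
  have : r ≤ N * r := Nat.le_mul_of_pos_left r hN.pos
  omega

theorem vandermonde_cpm_rank_general
    (N : ℕ) (hNp : N.Prime)
    (q : ℕ) (F : Type*) [Field F] [Fintype F] (hq : Fintype.card F = q)
    (hcop : Nat.Coprime q N)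
    (r : ℕ) (hr : 1 ≤ r) (hrN : r ≤ N) :
    (Matrix.of fun (p : Fin r × Fin N) (c : Fin N × Fin N) =>
      cpm F N ((p.1 : ℕ) * (c.1 : ℕ)) p.2 c.2).rank = N * r - r + 1 :=
  rank_vandermondeCPM hNp (natCast_ne_zero_of_coprime_card (hq ▸ hcop)) hr hrN

/-- Let `N` be an odd prime, `q` a prime power with `gcd(q, N) = 1` (realized as the
cardinality of the finite field `F`), and `1 ≤ r ≤ N`.  The Vandermonde-type
`rN × N²` matrix `V(I_N, P_N, …, P_N^{N-1}; r)` over `F`, whose `(i, j)` block is the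
circulant permutation matrix `P_N ^ ((i-1)(j-1) mod N)`, has rank `N*r - r + 1`. -/
theorem vandermonde_cpm_rank
    (N : ℕ) (hNp : N.Prime) (hNodd : Odd N)
    (q : ℕ) (F : Type*) [Field F] [Fintype F] (hq : Fintype.card F = q)
    (hcop : Nat.Coprime q N)
    (r : ℕ) (hr : 1 ≤ r) (hrN : r ≤ N) :
    (Matrix.of fun (p : Fin r × Fin N) (c : Fin N × Fin N) =>
      cpm F N ((p.1 : ℕ) * (c.1 : ℕ)) p.2 c.2).rank = N * r - r + 1 :=
  vandermonde_cpm_rank_general N hNp q F hq hcop r hr hrN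
end

section
/- Let N be an odd positive integer, q a prime power, and let 0 ≤ i_1 < i_2 ≤ N − 1. Let A be the N×N circulant matrix over F_q associated with a(x) = x^{i_1} + x^{i_2}. Then the girth of the Tanner graph of A equals 2N / gcd(N, i_2 − i_1); in particular, since N is odd, this girth is strictly greater than 4. -/
/-- The Tanner graph of a matrix `M`: the bipartite graph on the disjoint union of row
and column indices, in which row vertex `i` is adjacent to column vertex `j` iff
`M i j ≠ 0`. -/
def tannerGraph {m n : ℕ} {F : Type*} [Zero F] (M : Matrix (Fin m) (Fin n) F) :
    SimpleGraph (Fin m ⊕ Fin n) where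
  Adj u v := (∃ i j, u = Sum.inl i ∧ v = Sum.inr j ∧ M i j ≠ 0) ∨
             (∃ i j, u = Sum.inr j ∧ v = Sum.inl i ∧ M i j ≠ 0)
  symm := by
    constructor
    rintro u v (⟨i, j, rfl, rfl, h⟩ | ⟨i, j, rfl, rfl, h⟩)
    · exact Or.inr ⟨i, j, rfl, rfl, h⟩
    · exact Or.inl ⟨i, j, rfl, rfl, h⟩
  loopless := by
    constructor
    rintro u (⟨i, j, rfl, h, -⟩ | ⟨i, j, rfl, h, -⟩) <;> simp at h

/-!
Every vertex of the Tanner graph of `x ^ a + x ^ b` has at most two neighbours, so a cycle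
through a vertex must contain everything reachable from it. From row `r` one reaches the rows
`r + t (b - a)` and the columns next to them, `2 · ord (b - a)` vertices in all, which bounds every
cycle from below; conversely the walk `r, r + b, r + (b - a), r + (b - a) + b, …` closes up after
exactly `2 · ord (b - a)` steps. In `ZMod N` the order of `i2 - i1` is `N / gcd N (i2 - i1)`, which
divides the odd number `N` and is not `1`, hence is at least `3`.
-/

open Sum

namespace SimpleGraph.Walk

variable {V : Type*} {G : SimpleGraph V} {u : V} {w : G.Walk u u}

theorem IsCycle.card_support_toFinset [DecidableEq V] (hw : w.IsCycle) :
    w.support.toFinset.card = w.length := by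
  have htail : w.support.toFinset = w.support.tail.toFinset := by
    rw [← w.cons_tail_support, List.toFinset_cons, List.tail_cons,
      Finset.insert_eq_of_mem (List.mem_toFinset.mpr (end_mem_tail_support hw.not_nil))]
  rw [htail, List.toFinset_card_of_nodup hw.support_nodup, List.length_tail, length_support,
    Nat.add_sub_cancel]

theorem IsCycle.mem_support_of_adj (hw : w.IsCycle) {v x : V}
    (hdeg : (G.neighborSet v).encard ≤ 2) (hv : v ∈ w.support) (hvx : G.Adj v x) :
    x ∈ w.support := by
  have hfin : (G.neighborSet v).Finite := Set.finite_of_encard_le_coe hdeg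
  have hsub := w.toSubgraph.neighborSet_subset v
  have hcard : (w.toSubgraph.neighborSet v).encard = 2 := by
    rw [← (hfin.subset hsub).cast_ncard_eq, hw.ncard_neighborSet_toSubgraph_eq_two hv]; rfl
  have heq := (hfin.subset hsub).eq_of_subset_of_encard_le hsub (hcard ▸ hdeg)
  rw [← mem_verts_toSubgraph]
  exact Subgraph.Adj.snd_mem (show x ∈ w.toSubgraph.neighborSet v from heq ▸ hvx)

theorem IsCycle.mem_support_of_reachable (hw : w.IsCycle)
    (hdeg : ∀ v, (G.neighborSet v).encard ≤ 2) {v x : V} (hv : v ∈ w.support)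
    (hx : G.Reachable v x) : x ∈ w.support := by
  obtain ⟨p⟩ := hx
  induction p with
  | nil => exact hv
  | cons h _ ih => exact ih (hw.mem_support_of_adj (hdeg _) hv h)

end SimpleGraph.Walk

open SimpleGraph

theorem IsOfFinAddOrder.one_lt_addOrderOf {G : Type*} [AddMonoid G] {x : G}
    (hx : IsOfFinAddOrder x) (h : x ≠ 0) : 1 < addOrderOf x :=
  lt_of_le_of_ne hx.addOrderOf_pos (Ne.symm (mt AddMonoid.addOrderOf_eq_one_iff.mp h))

section BinomialTannerGraph

variable {A : Type*} [AddCommGroup A] {a b : A}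

/-- Rows and columns are both indexed by `A`; for `A = ZMod N` this is the Tanner graph of the
circulant matrix of `x ^ a + x ^ b`. -/
def binomialTannerGraph (a b : A) : SimpleGraph (A ⊕ A) where
  Adj
    | inl r, inr c | inr c, inl r => c = r + a ∨ c = r + b
    | _, _ => False
  symm := by
    constructor
    rintro (_ | _) (_ | _) h <;> exact h
  loopless := by
    constructor
    rintro (_ | _) h <;> exact h

@[simp]
theorem binomialTannerGraph_adj_inl_inr {r c : A} :
    (binomialTannerGraph a b).Adj (inl r) (inr c) ↔ c = r + a ∨ c = r + b :=
  Iff.rfl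

@[simp]
theorem binomialTannerGraph_adj_inr_inl {r c : A} :
    (binomialTannerGraph a b).Adj (inr c) (inl r) ↔ c = r + a ∨ c = r + b :=
  Iff.rfl

@[simp]
theorem binomialTannerGraph_not_adj_inl_inl {r r' : A} :
    ¬(binomialTannerGraph a b).Adj (inl r) (inl r') :=
  id

@[simp]
theorem binomialTannerGraph_not_adj_inr_inr {c c' : A} :
    ¬(binomialTannerGraph a b).Adj (inr c) (inr c') :=
  id

theorem encard_neighborSet_binomialTannerGraph_le (v : A ⊕ A) :
    ((binomialTannerGraph a b).neighborSet v).encard ≤ 2 := by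
  have hpair : ∀ x y : A ⊕ A, ({x, y} : Set (A ⊕ A)).encard ≤ 2 := fun x y =>
    (Set.encard_insert_le _ _).trans (by rw [Set.encard_singleton]; rfl)
  refine (Set.encard_le_encard ?_).trans
    (hpair (v.elim (fun r => inr (r + a)) (fun c => inl (c - a)))
      (v.elim (fun r => inr (r + b)) (fun c => inl (c - b))))
  rcases v with r | c <;> rintro (r' | c') h <;>
    simp_all [eq_sub_iff_add_eq, eq_comm]

theorem binomialTannerGraph_reachable_inl_add_nsmul (r : A) (t : ℕ) :
    (binomialTannerGraph a b).Reachable (inl r) (inl (r + t • (b - a))) := by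
  induction t with
  | zero => simp
  | succ t ih =>
    refine ih.trans (Adj.reachable (v := inr (r + t • (b - a) + b)) (by simp) |>.trans
      (Adj.reachable ?_))
    simp only [binomialTannerGraph_adj_inr_inl, succ_nsmul]
    left; abel

theorem binomialTannerGraph_exists_reachable_inl (v : A ⊕ A) :
    ∃ r, (binomialTannerGraph a b).Reachable v (inl r) := by
  rcases v with r | c
  · exact ⟨r, .rfl⟩
  · exact ⟨c - a, Adj.reachable (by simp)⟩

theorem le_egirth_binomialTannerGraph (a b : A) :
    ((2 * addOrderOf (b - a) : ℕ) : ℕ∞) ≤ (binomialTannerGraph a b).egirth := by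
  classical
  refine le_egirth.mpr fun u w hw => ?_
  obtain ⟨r, hr⟩ := binomialTannerGraph_exists_reachable_inl u
  have hrows : ((Finset.range (addOrderOf (b - a))).image fun t => r + t • (b - a)).card =
      addOrderOf (b - a) := by
    rw [Finset.card_image_of_injOn, Finset.card_range]
    intro s hs t ht h
    exact nsmul_injOn_Iio_addOrderOf (by simpa using hs) (by simpa using ht) (add_left_cancel h)
  set rows := (Finset.range (addOrderOf (b - a))).image fun t => r + t • (b - a)
  have hsub : rows.disjSum (rows.image (· + b)) ⊆ w.support.toFinset := by
    intro x hx
    rw [List.mem_toFinset]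
    refine hw.mem_support_of_reachable encard_neighborSet_binomialTannerGraph_le
      w.start_mem_support (hr.trans ?_)
    rcases x with x | x <;> simp only [Finset.inl_mem_disjSum, Finset.inr_mem_disjSum,
      Finset.mem_image, Finset.mem_range, rows] at hx
    · obtain ⟨t, -, rfl⟩ := hx
      exact binomialTannerGraph_reachable_inl_add_nsmul r t
    · obtain ⟨_, ⟨t, -, rfl⟩, rfl⟩ := hx
      exact (binomialTannerGraph_reachable_inl_add_nsmul r t).trans (Adj.reachable (by simp))
  have := Finset.card_le_card hsub
  rw [Finset.card_disjSum, Finset.card_image_of_injective _ (add_left_injective b), hrows,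
    hw.card_support_toFinset] at this
  exact_mod_cast (by omega : 2 * addOrderOf (b - a) ≤ w.length)

namespace binomialTannerGraph

def cycleVert (a b : A) (n : ℕ) : A ⊕ A :=
  if Even n then inl ((n / 2) • (b - a)) else inr ((n / 2) • (b - a) + b)

theorem cycleVert_two_mul (t : ℕ) : cycleVert a b (2 * t) = inl (t • (b - a)) := by
  simp [cycleVert]

theorem cycleVert_two_mul_add_one (t : ℕ) :
    cycleVert a b (2 * t + 1) = inr (t • (b - a) + b) := by
  simp [cycleVert, show (2 * t + 1) / 2 = t by omega]

theorem adj_cycleVert_succ (n : ℕ) :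
    (binomialTannerGraph a b).Adj (cycleVert a b n) (cycleVert a b (n + 1)) := by
  obtain ⟨t, rfl | rfl⟩ := Nat.even_or_odd' n
  · simp [cycleVert_two_mul, cycleVert_two_mul_add_one]
  · rw [cycleVert_two_mul_add_one, show 2 * t + 1 + 1 = 2 * (t + 1) by ring, cycleVert_two_mul,
      binomialTannerGraph_adj_inr_inl, succ_nsmul]
    left; abel

theorem cycleVert_periodic : Function.Periodic (cycleVert a b) (2 * addOrderOf (b - a)) := by
  intro n
  obtain ⟨t, rfl | rfl⟩ := Nat.even_or_odd' n
  · rw [← mul_add, cycleVert_two_mul, cycleVert_two_mul, add_nsmul, addOrderOf_nsmul_eq_zero,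
      add_zero]
  · rw [add_right_comm, ← mul_add, cycleVert_two_mul_add_one, cycleVert_two_mul_add_one,
      add_nsmul, addOrderOf_nsmul_eq_zero, add_zero]

theorem cycleVert_injOn : Set.InjOn (cycleVert a b) (Set.Iio (2 * addOrderOf (b - a))) := by
  intro n hn n' hn' h
  simp only [Set.mem_Iio] at hn hn'
  obtain ⟨t, rfl | rfl⟩ := Nat.even_or_odd' n <;> obtain ⟨t', rfl | rfl⟩ := Nat.even_or_odd' n' <;>
    simp only [cycleVert_two_mul, cycleVert_two_mul_add_one, inl.injEq, inr.injEq,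
      add_left_inj, reduceCtorEq] at h
  all_goals rw [nsmul_injOn_Iio_addOrderOf (by simp; omega) (by simp; omega) h]

end binomialTannerGraph

open binomialTannerGraph in
theorem cycleGraph_isContained_binomialTannerGraph :
    cycleGraph (2 * addOrderOf (b - a)) ⊑ binomialTannerGraph a b := by
  refine ⟨⟨⟨fun j => cycleVert a b j, fun {u v} huv => ?_⟩, fun u v h =>
    Fin.ext (cycleVert_injOn u.isLt v.isLt h)⟩⟩
  have hsucc : ∀ u v : Fin (2 * addOrderOf (b - a)), (u - v).val = 1 →
      cycleVert a b u = cycleVert a b (v + 1) := by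
    intro u v h
    have : NeZero (2 * addOrderOf (b - a)) := NeZero.of_pos u.pos
    rw [← cycleVert_periodic.map_mod_nat (v + 1), ← h, ← Fin.val_add, add_sub_cancel]
  rcases cycleGraph_adj'.mp huv with h | h
  · exact hsucc u v h ▸ (adj_cycleVert_succ v.val).symm
  · exact hsucc v u h ▸ adj_cycleVert_succ u.val

theorem egirth_binomialTannerGraph (hab : a ≠ b) (hfin : IsOfFinAddOrder (b - a)) :
    (binomialTannerGraph a b).egirth = 2 * addOrderOf (b - a) := by
  refine le_antisymm ?_ (by exact_mod_cast le_egirth_binomialTannerGraph a b)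
  have := hfin.one_lt_addOrderOf (sub_ne_zero.mpr hab.symm)
  obtain ⟨v, w, hw, hlen⟩ := (cycleGraph_isContained_iff (by omega)).mp
    (cycleGraph_isContained_binomialTannerGraph (a := a) (b := b))
  exact_mod_cast hlen ▸ egirth_le_length hw

end BinomialTannerGraph

section TannerGraph

variable {m n : ℕ} {F : Type*} [Zero F] {M : Matrix (Fin m) (Fin n) F}

theorem tannerGraph_adj_inl_inr {i : Fin m} {j : Fin n} :
    (tannerGraph M).Adj (inl i) (inr j) ↔ M i j ≠ 0 := by
  simp [tannerGraph]

theorem tannerGraph_adj_inr_inl {i : Fin m} {j : Fin n} :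
    (tannerGraph M).Adj (inr j) (inl i) ↔ M i j ≠ 0 := by
  simp [tannerGraph]

theorem tannerGraph_not_adj_inl_inl {i i' : Fin m} : ¬(tannerGraph M).Adj (inl i) (inl i') := by
  simp [tannerGraph]

theorem tannerGraph_not_adj_inr_inr {j j' : Fin n} : ¬(tannerGraph M).Adj (inr j) (inr j') := by
  simp [tannerGraph]

end TannerGraph

theorem cpm_add_cpm_apply_ne_zero {F : Type*} [AddMonoidWithOne F] [NeZero (1 : F)]
    {N i1 i2 : ℕ} (hne : (i1 : ZMod N) ≠ i2) (r c : Fin N) :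
    (cpm F N i1 + cpm F N i2) r c ≠ 0 ↔
      ((c : ℕ) : ZMod N) = (r : ℕ) + i1 ∨ ((c : ℕ) : ZMod N) = (r : ℕ) + i2 := by
  simp only [Matrix.add_apply, cpm, Matrix.of_apply]
  split_ifs with h1 h2 h2
  · exact absurd (add_left_cancel (h1.symm.trans h2)) hne
  all_goals simp_all

theorem ZMod.finEquiv_apply (N : ℕ) [NeZero N] (x : Fin N) : ZMod.finEquiv N x = (x : ℕ) := by
  cases N with
  | zero => exact (NeZero.ne 0 rfl).elim
  | succ n => exact (Fin.cast_val_eq_self x).symm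

def tannerGraphCpmAddCpmIso (F : Type*) [AddMonoidWithOne F] [NeZero (1 : F)] {N i1 i2 : ℕ}
    [NeZero N] (hne : (i1 : ZMod N) ≠ i2) :
    tannerGraph (cpm F N i1 + cpm F N i2) ≃g binomialTannerGraph (i1 : ZMod N) i2 where
  toEquiv := Equiv.sumCongr (ZMod.finEquiv N).toEquiv (ZMod.finEquiv N).toEquiv
  map_rel_iff' := by
    rintro (r | c) (r' | c') <;>
      simp only [Equiv.sumCongr_apply, Sum.map_inl, Sum.map_inr, RingEquiv.toEquiv_eq_coe,
        EquivLike.coe_coe, ZMod.finEquiv_apply, binomialTannerGraph_adj_inl_inr,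
        binomialTannerGraph_adj_inr_inl, tannerGraph_adj_inl_inr, tannerGraph_adj_inr_inl,
        binomialTannerGraph_not_adj_inl_inl, binomialTannerGraph_not_adj_inr_inr,
        tannerGraph_not_adj_inl_inl, tannerGraph_not_adj_inr_inr, cpm_add_cpm_apply_ne_zero hne]

theorem girth_tanner_graph_weight_two_circulant_general
    (N : ℕ) (hNodd : Odd N)
    (F : Type*) [Field F]
    (i1 i2 : ℕ) (h12 : i1 < i2) (hi2 : i2 ≤ N - 1) :
    (tannerGraph (cpm F N i1 + cpm F N i2)).egirth
        = ((2 * N / Nat.gcd N (i2 - i1) : ℕ) : ℕ∞)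
      ∧ 4 < (tannerGraph (cpm F N i1 + cpm F N i2)).egirth := by
  have : NeZero N := ⟨by omega⟩
  have hne : (i1 : ZMod N) ≠ i2 := by
    rw [Ne, ZMod.natCast_eq_natCast_iff', Nat.mod_eq_of_lt, Nat.mod_eq_of_lt] <;> omega
  have horder : addOrderOf ((i2 : ZMod N) - i1) = N / N.gcd (i2 - i1) := by
    rw [← Nat.cast_sub h12.le, ZMod.addOrderOf_coe' _ (by omega)]
  have hfin := isOfFinAddOrder_of_finite ((i2 : ZMod N) - i1)
  have hgirth := (tannerGraphCpmAddCpmIso F hne).egirth_eq.trans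
    (egirth_binomialTannerGraph hne hfin)
  have hlt := hfin.one_lt_addOrderOf (sub_ne_zero.mpr hne.symm)
  have hodd : Odd (N / N.gcd (i2 - i1)) :=
    hNodd.of_dvd_nat (Nat.div_dvd_of_dvd (Nat.gcd_dvd_left _ _))
  rw [horder] at hgirth hlt
  rw [hgirth, Nat.mul_div_assoc _ (Nat.gcd_dvd_left _ _)]
  obtain ⟨k, hk⟩ := hodd
  exact ⟨rfl, by exact_mod_cast (by omega : 4 < 2 * (N / N.gcd (i2 - i1)))⟩

/-- **Girth of the Tanner graph of a weight-2 circulant.**  Let `N` be odd,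
`0 ≤ i1 < i2 ≤ N - 1`, and let `A = P_N^{i1} + P_N^{i2}` be the circulant matrix of
`a(x) = x^{i1} + x^{i2}` over a finite field `F`.  Then the girth of the Tanner graph
of `A` equals `2N / gcd(N, i2 - i1)`; in particular (since `N` is odd) it is strictly
greater than 4. -/
theorem girth_tanner_graph_weight_two_circulant
    (N : ℕ) (hN0 : 0 < N) (hNodd : Odd N)
    (q : ℕ) (F : Type*) [Field F] [Fintype F] (hq : Fintype.card F = q)
    (i1 i2 : ℕ) (h12 : i1 < i2) (hi2 : i2 ≤ N - 1) :
    (tannerGraph (cpm F N i1 + cpm F N i2)).egirth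
        = ((2 * N / Nat.gcd N (i2 - i1) : ℕ) : ℕ∞)
      ∧ 4 < (tannerGraph (cpm F N i1 + cpm F N i2)).egirth :=
  girth_tanner_graph_weight_two_circulant_general N hNodd F i1 i2 h12 hi2
end

section
/- Let N be an odd positive integer, q a prime power, t > 2, and let a(x) = x^{i_1} + x^{i_2} + ⋯ + x^{i_t} with distinct exponents i_1 < i_2 < ⋯ < i_t in ℤ/N. If Δ(Index(a)) is a set, i.e., {i_1, …, i_t} is an N-modular Golomb ruler, then the N×N circulant matrix A of a(x) over F_q is free of 4-cycles (the girth of its Tanner graph exceeds 4). -/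
/-- The `N × N` circulant matrix over `F` whose associated polynomial has support
`S ⊆ ℤ/N` with all nonzero coefficients equal to `1`: its `(a, b)` entry is `1` iff
`(b - a) mod N ∈ S`. -/
def circOfSupport (F : Type*) [Zero F] [One F] (N : ℕ) (S : Finset (ZMod N)) :
    Matrix (Fin N) (Fin N) F :=
  Matrix.of fun a b => if ((b : ℕ) : ZMod N) - ((a : ℕ) : ZMod N) ∈ S then 1 else 0

/-- `S ⊆ ℤ/N` is an `N`-modular Golomb ruler: the differences of ordered pairs of
distinct elements of `S` are pairwise distinct (i.e. `Δ(S)` is a set). -/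
def IsModularGolombRuler {N : ℕ} (S : Finset (ZMod N)) : Prop :=
  ∀ a ∈ S, ∀ b ∈ S, ∀ c ∈ S, ∀ d ∈ S, a ≠ b → c ≠ d → a - b = c - d → a = c ∧ b = d

/-- **Absence of 4-cycles in a single CM(t), t > 2.**  Let `N` be odd, `t > 2`, and let
`a(x) = x^{i1} + ⋯ + x^{it}` have support `S ⊆ ℤ/N` with `|S| = t`.  If `Δ(Index(a))`
is a set (i.e. `S` is an `N`-modular Golomb ruler), then the circulant matrix of `a`
over the finite field `F` is free of 4-cycles. -/
theorem single_cm_free_of_four_cycles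
    (N : ℕ) (hN0 : 0 < N) (hNodd : Odd N)
    (q : ℕ) (F : Type*) [Field F] [Fintype F] (hq : Fintype.card F = q)
    (t : ℕ) (ht : 2 < t) (S : Finset (ZMod N)) (hcard : S.card = t)
    (hGolomb : IsModularGolombRuler S) :
    FreeOfFourCycles (circOfSupport F N S) := by
  rintro ⟨i1, i2, j1, j2, hi, hj, h11, h12, h21, h22⟩
  have inj : ∀ x y : Fin N, ((x : ℕ) : ZMod N) = ((y : ℕ) : ZMod N) → x = y := by
    intro x y h
    have := congrArg ZMod.val h
    rwa [ZMod.val_natCast_of_lt x.isLt, ZMod.val_natCast_of_lt y.isLt,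
      Fin.val_inj] at this
  simp only [circOfSupport, Matrix.of_apply, ne_eq, ite_eq_right_iff,
    one_ne_zero, imp_false, not_not] at h11 h12 h21 h22
  have hj' : ((j1 : ℕ) : ZMod N) ≠ ((j2 : ℕ) : ZMod N) := fun h => hj (inj _ _ h)
  have hd : (((j1 : ℕ) : ZMod N) - ((i1 : ℕ) : ZMod N)) - (((j2 : ℕ) : ZMod N) - ((i1 : ℕ) : ZMod N))
      = (((j1 : ℕ) : ZMod N) - ((i2 : ℕ) : ZMod N)) - (((j2 : ℕ) : ZMod N) - ((i2 : ℕ) : ZMod N)) := by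
    ring
  have := hGolomb _ h11 _ h12 _ h21 _ h22 (by intro h; exact hj' (by linear_combination h))
    (by intro h; exact hj' (by linear_combination h)) hd
  apply hi
  apply inj
  linear_combination -this.1
end

section
/- Let N be an odd positive integer, q a prime power, t ≥ 2, and let a_1(x) = Σ_{j=1}^t x^{i_{1,j}} and a_2(x) = Σ_{j=1}^t x^{i_{2,j}} be sums of t distinct monomials with exponents in ℤ/N, with associated N×N circulant matrices A_1 and A_2 over F_q. If Δ(Index(a_1)) and Δ(Index(a_2)) are both sets and Δ(Index(a_1)) ∩ Δ(Index(a_2)) = ∅, then the N × 2N matrix (A_1 | A_2) obtained by horizontal concatenation is free of 4-cycles (the girth of its Tanner graph exceeds 4). -/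
/-- `Δ(S)`: the set of differences of ordered pairs of distinct elements of `S ⊆ ℤ/N`. -/
def deltaSet {N : ℕ} (S : Finset (ZMod N)) : Set (ZMod N) :=
  {d | ∃ a ∈ S, ∃ b ∈ S, a ≠ b ∧ d = a - b}

/-- **Absence of 4-cycles between two CM(t)s.**  Let `N` be odd, `t ≥ 2`, and let
`a1, a2` be sums of `t` distinct monomials with supports `S1, S2 ⊆ ℤ/N`.  If
`Δ(S1)` and `Δ(S2)` are sets (both supports are `N`-modular Golomb rulers) and
`Δ(S1) ∩ Δ(S2) = ∅`, then the `N × 2N` matrix `(A1 | A2)` of the two circulant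
matrices over the finite field `F` is free of 4-cycles. -/
theorem two_cm_free_of_four_cycles
    (N : ℕ) (hN0 : 0 < N) (hNodd : Odd N)
    (q : ℕ) (F : Type*) [Field F] [Fintype F] (hq : Fintype.card F = q)
    (t : ℕ) (ht : 2 ≤ t) (S1 S2 : Finset (ZMod N))
    (hcard1 : S1.card = t) (hcard2 : S2.card = t)
    (hG1 : IsModularGolombRuler S1) (hG2 : IsModularGolombRuler S2)
    (hdisj : deltaSet S1 ∩ deltaSet S2 = ∅) :
    FreeOfFourCycles (Matrix.of fun (a : Fin N) (b : Fin N ⊕ Fin N) =>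
      Sum.elim (fun b1 => circOfSupport F N S1 a b1)
               (fun b2 => circOfSupport F N S2 a b2) b) := by

  rintro ⟨i1, i2, j1, j2, hij, hjj, h11, h12, h21, h22⟩
  have hcast : ∀ a b : Fin N, ((a : ℕ) : ZMod N) = ((b : ℕ) : ZMod N) → a = b := by
    intro a b h
    have h' := congrArg ZMod.val h
    rw [ZMod.val_cast_of_lt a.isLt, ZMod.val_cast_of_lt b.isLt] at h'
    exact Fin.ext h'
  have hmem : ∀ (S : Finset (ZMod N)) (a b : Fin N),
      circOfSupport F N S a b ≠ 0 → ((b : ℕ) : ZMod N) - ((a : ℕ) : ZMod N) ∈ S := by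
    intro S a b h
    by_contra hm
    simp [circOfSupport, hm] at h
  have hii : ((i1 : ℕ) : ZMod N) ≠ ((i2 : ℕ) : ZMod N) := fun h => hij (hcast _ _ h)
  -- same-block contradiction
  have same : ∀ (S : Finset (ZMod N)), IsModularGolombRuler S →
      ∀ b1 b2 : Fin N, b1 ≠ b2 →
      circOfSupport F N S i1 b1 ≠ 0 → circOfSupport F N S i1 b2 ≠ 0 →
      circOfSupport F N S i2 b1 ≠ 0 → circOfSupport F N S i2 b2 ≠ 0 → False := by
    intro S hG b1 b2 hbb m11 m12 m21 m22
    have x11 := hmem S i1 b1 m11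
    have x12 := hmem S i1 b2 m12
    have x21 := hmem S i2 b1 m21
    have x22 := hmem S i2 b2 m22
    have hbb' : ((b1 : ℕ) : ZMod N) ≠ ((b2 : ℕ) : ZMod N) := fun h => hbb (hcast _ _ h)
    have hne1 : ((b1 : ℕ) : ZMod N) - ((i1 : ℕ) : ZMod N) ≠ ((b2 : ℕ) : ZMod N) - ((i1 : ℕ) : ZMod N) := by
      intro h; exact hbb' (by linear_combination h)
    have hne2 : ((b1 : ℕ) : ZMod N) - ((i2 : ℕ) : ZMod N) ≠ ((b2 : ℕ) : ZMod N) - ((i2 : ℕ) : ZMod N) := by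
      intro h; exact hbb' (by linear_combination h)
    have heq : ((b1 : ℕ) : ZMod N) - ((i1 : ℕ) : ZMod N) - (((b2 : ℕ) : ZMod N) - ((i1 : ℕ) : ZMod N))
        = ((b1 : ℕ) : ZMod N) - ((i2 : ℕ) : ZMod N) - (((b2 : ℕ) : ZMod N) - ((i2 : ℕ) : ZMod N)) := by
      ring
    have := (hG _ x11 _ x12 _ x21 _ x22 hne1 hne2 heq).1
    exact hii (by linear_combination -this)
  -- mixed-block contradiction
  have mixed : ∀ (c1 c2 : Fin N),
      circOfSupport F N S1 i1 c1 ≠ 0 → circOfSupport F N S1 i2 c1 ≠ 0 →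
      circOfSupport F N S2 i1 c2 ≠ 0 → circOfSupport F N S2 i2 c2 ≠ 0 → False := by
    intro c1 c2 m1 m2 m3 m4
    have x1 := hmem S1 i1 c1 m1
    have x2 := hmem S1 i2 c1 m2
    have x3 := hmem S2 i1 c2 m3
    have x4 := hmem S2 i2 c2 m4
    have hne1 : ((c1 : ℕ) : ZMod N) - ((i1 : ℕ) : ZMod N) ≠ ((c1 : ℕ) : ZMod N) - ((i2 : ℕ) : ZMod N) := by
      intro h; exact hii (by linear_combination -h)
    have hne2 : ((c2 : ℕ) : ZMod N) - ((i1 : ℕ) : ZMod N) ≠ ((c2 : ℕ) : ZMod N) - ((i2 : ℕ) : ZMod N) := by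
      intro h; exact hii (by linear_combination -h)
    have hd : (((i2 : ℕ) : ZMod N) - ((i1 : ℕ) : ZMod N)) ∈ deltaSet S1 ∩ deltaSet S2 := by
      constructor
      · exact ⟨_, x1, _, x2, hne1, by ring⟩
      · exact ⟨_, x3, _, x4, hne2, by ring⟩
    rw [hdisj] at hd
    exact hd
  rcases j1 with b1 | b1 <;> rcases j2 with b2 | b2 <;>
    simp only [Matrix.of_apply, Sum.elim_inl, Sum.elim_inr] at h11 h12 h21 h22
  · exact same S1 hG1 b1 b2 (fun h => hjj (by rw [h])) h11 h12 h21 h22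
  · exact mixed b1 b2 h11 h21 h12 h22
  · exact mixed b2 b1 h12 h22 h11 h21
  · exact same S2 hG2 b1 b2 (fun h => hjj (by rw [h])) h11 h12 h21 h22
end

section
/- Let N be an odd positive integer, q a prime power, t ≥ 2, and for (u, v) ∈ {1,2}×{1,2} let a_{u,v}(x) = Σ_{j=1}^t x^{i_{u,v,j}} be a sum of t distinct monomials with exponents in ℤ/N, with associated N×N circulant matrix A_{u,v} over F_q. Suppose: (i) each of Δ(Index(a_{1,1})), Δ(Index(a_{1,2})), Δ(Index(a_{2,1})), Δ(Index(a_{2,2})) is a set; (ii) Δ(Index(a_{1,1})) ∩ Δ(Index(a_{2,1})) = ∅, Δ(Index(a_{1,2})) ∩ Δ(Index(a_{2,2})) = ∅, Δ(Index(a_{1,1})) ∩ Δ(Index(a_{1,2})) = ∅, and Δ(Index(a_{2,1})) ∩ Δ(Index(a_{2,2})) = ∅; and (iii) 0 ∉ (Index(a_{1,1}) + Index(a_{2,2})) − (Index(a_{1,2}) + Index(a_{2,1})). Then the 2N × 2N block matrix [[A_{1,1}, A_{1,2}], [A_{2,1}, A_{2,2}]] is free of 4-cycles (the girth of its Tanner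 graph exceeds 4). -/
/-- **Absence of 4-cycles among four CM(t)s.**  Let `N` be odd, `t ≥ 2`, and for
`u, v ∈ {1, 2}` let `a u v` be a sum of `t` distinct monomials with support
`S u v ⊆ ℤ/N` and circulant matrix `A u v` over the finite field `F`.  Suppose
(i) each `Δ(S u v)` is a set; (ii) `Δ(S 1 1) ∩ Δ(S 2 1) = Δ(S 1 2) ∩ Δ(S 2 2) = ∅`
(vertical) and `Δ(S 1 1) ∩ Δ(S 1 2) = Δ(S 2 1) ∩ Δ(S 2 2) = ∅` (horizontal); and
(iii) `0 ∉ (S 1 1 + S 2 2) - (S 1 2 + S 2 1)`.  Then the `2N × 2N` block matrix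
`[[A 1 1, A 1 2], [A 2 1, A 2 2]]` is free of 4-cycles. -/
theorem four_cm_free_of_four_cycles
    (N : ℕ) (hN0 : 0 < N) (hNodd : Odd N)
    (q : ℕ) (F : Type*) [Field F] [Fintype F] (hq : Fintype.card F = q)
    (t : ℕ) (ht : 2 ≤ t) (S : Fin 2 → Fin 2 → Finset (ZMod N))
    (hcard : ∀ u v, (S u v).card = t)
    (hG : ∀ u v, IsModularGolombRuler (S u v))
    (hvert1 : deltaSet (S 0 0) ∩ deltaSet (S 1 0) = ∅)
    (hvert2 : deltaSet (S 0 1) ∩ deltaSet (S 1 1) = ∅)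
    (hhor1 : deltaSet (S 0 0) ∩ deltaSet (S 0 1) = ∅)
    (hhor2 : deltaSet (S 1 0) ∩ deltaSet (S 1 1) = ∅)
    (hsum : ∀ a ∈ S 0 0, ∀ d ∈ S 1 1, ∀ b ∈ S 0 1, ∀ c ∈ S 1 0, a + d - (b + c) ≠ 0) :
    FreeOfFourCycles (Matrix.of fun (p : Fin 2 × Fin N) (c : Fin 2 × Fin N) =>
      circOfSupport F N (S p.1 c.1) p.2 c.2) := by
  rintro ⟨⟨u1, r1⟩, ⟨u2, r2⟩, ⟨v1, c1⟩, ⟨v2, c2⟩, hrow, hcol, h11, h12, h21, h22⟩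
  -- injectivity of the natural cast Fin N → ZMod N
  have inj : ∀ r s : Fin N, ((r : ℕ) : ZMod N) = ((s : ℕ) : ZMod N) → r = s := by
    intro r s h
    apply Fin.ext
    rw [← ZMod.val_natCast_of_lt r.isLt, ← ZMod.val_natCast_of_lt s.isLt, h]
  -- extract memberships
  have mem : ∀ (u v : Fin 2) (r c : Fin N), circOfSupport F N (S u v) r c ≠ 0 →
      ((c : ℕ) : ZMod N) - ((r : ℕ) : ZMod N) ∈ S u v := by
    intro u v r c h
    by_contra hm
    simp [circOfSupport, hm] at h
  simp only [Matrix.of_apply] at h11 h12 h21 h22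
  have hA := mem _ _ _ _ h11
  have hB := mem _ _ _ _ h12
  have hC := mem _ _ _ _ h21
  have hD := mem _ _ _ _ h22
  set A := ((c1 : ℕ) : ZMod N) - ((r1 : ℕ) : ZMod N) with hAdef
  set B := ((c2 : ℕ) : ZMod N) - ((r1 : ℕ) : ZMod N) with hBdef
  set C := ((c1 : ℕ) : ZMod N) - ((r2 : ℕ) : ZMod N) with hCdef
  set D := ((c2 : ℕ) : ZMod N) - ((r2 : ℕ) : ZMod N) with hDdef
  have hABCD : A - B = C - D := by rw [hAdef, hBdef, hCdef, hDdef]; ring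
  have hACBD : A - C = B - D := by rw [hAdef, hBdef, hCdef, hDdef]; ring
  have hADBC : A + D = B + C := by rw [hAdef, hBdef, hCdef, hDdef]; ring
  have hrAC : r1 ≠ r2 → A ≠ C := by
    intro hr h
    apply hr
    apply inj
    have h0 : A - C = 0 := by rw [h]; ring
    rw [hAdef, hCdef] at h0
    linear_combination -h0
  have hcAB : c1 ≠ c2 → A ≠ B := by
    intro hc h
    apply hc
    apply inj
    have h0 : A - B = 0 := by rw [h]; ring
    rw [hAdef, hBdef] at h0
    linear_combination h0
  have hru : u1 = u2 → r1 ≠ r2 := by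
    rintro rfl h; exact hrow (by rw [h])
  have hcv : v1 = v2 → c1 ≠ c2 := by
    rintro rfl h; exact hcol (by rw [h])
  by_cases hu : u1 = u2 <;> by_cases hv : v1 = v2
  · -- same block
    subst hu; subst hv
    have hAC := hrAC (hru rfl)
    have hAB := hcAB (hcv rfl)
    have hCD : C ≠ D := fun h => hAB (by rw [← sub_eq_zero] at h ⊢; rw [hABCD, h])
    exact hAC (hG u1 v1 A hA B hB C hC D hD hAB hCD hABCD).1
  · -- same row of blocks, different column blocks
    subst hu
    have hAC := hrAC (hru rfl)
    have hBD : B ≠ D := fun h => hAC (by rw [← sub_eq_zero] at h ⊢; rw [hACBD, h])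
    have hmem1 : A - C ∈ deltaSet (S u1 v1) := ⟨A, hA, C, hC, hAC, rfl⟩
    have hmem2 : A - C ∈ deltaSet (S u1 v2) := hACBD ▸ (⟨B, hB, D, hD, hBD, rfl⟩ :
      B - D ∈ deltaSet (S u1 v2))
    clear_value A B C D
    clear h11 h12 h21 h22 mem inj hrow hcol hAdef hBdef hCdef hDdef hrAC hcAB hru hcv
    fin_cases u1 <;> fin_cases v1 <;> fin_cases v2
    · exact hv rfl
    · exact Set.eq_empty_iff_forall_notMem.mp hhor1 _ ⟨hmem1, hmem2⟩
    · exact Set.eq_empty_iff_forall_notMem.mp hhor1 _ ⟨hmem2, hmem1⟩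
    · exact hv rfl
    · exact hv rfl
    · exact Set.eq_empty_iff_forall_notMem.mp hhor2 _ ⟨hmem1, hmem2⟩
    · exact Set.eq_empty_iff_forall_notMem.mp hhor2 _ ⟨hmem2, hmem1⟩
    · exact hv rfl
  · -- same column of blocks, different row blocks
    subst hv
    have hAB := hcAB (hcv rfl)
    have hCD : C ≠ D := fun h => hAB (by rw [← sub_eq_zero] at h ⊢; rw [hABCD, h])
    have hmem1 : A - B ∈ deltaSet (S u1 v1) := ⟨A, hA, B, hB, hAB, rfl⟩
    have hmem2 : A - B ∈ deltaSet (S u2 v1) := hABCD ▸ (⟨C, hC, D, hD, hCD, rfl⟩ :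
      C - D ∈ deltaSet (S u2 v1))
    clear_value A B C D
    clear h11 h12 h21 h22 mem inj hrow hcol hAdef hBdef hCdef hDdef hrAC hcAB hru hcv
    fin_cases u1 <;> fin_cases u2 <;> fin_cases v1
    · exact hu rfl
    · exact hu rfl
    · exact Set.eq_empty_iff_forall_notMem.mp hvert1 _ ⟨hmem1, hmem2⟩
    · exact Set.eq_empty_iff_forall_notMem.mp hvert2 _ ⟨hmem1, hmem2⟩
    · exact Set.eq_empty_iff_forall_notMem.mp hvert1 _ ⟨hmem2, hmem1⟩
    · exact Set.eq_empty_iff_forall_notMem.mp hvert2 _ ⟨hmem2, hmem1⟩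
    · exact hu rfl
    · exact hu rfl
  · -- four different blocks
    clear_value A B C D
    clear h11 h12 h21 h22 mem inj hrow hcol hAdef hBdef hCdef hDdef hrAC hcAB hru hcv
    fin_cases u1 <;> fin_cases u2 <;> fin_cases v1 <;> fin_cases v2
    · exact hu rfl
    · exact hu rfl
    · exact hu rfl
    · exact hu rfl
    · exact hv rfl
    · exact hsum A hA D hD B hB C hC (by rw [sub_eq_zero]; exact hADBC)
    · exact hsum B hB C hC A hA D hD (by rw [sub_eq_zero]; exact hADBC.symm)
    · exact hv rfl
    · exact hv rfl
    · exact hsum C hC B hB D hD A hA (by rw [sub_eq_zero]; linear_combination -hADBC)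
    · exact hsum D hD A hA C hC B hB (by rw [sub_eq_zero]; linear_combination hADBC)
    · exact hv rfl
    · exact hu rfl
    · exact hu rfl
    · exact hu rfl
    · exact hu rfl
end

section
/- Let N ≥ 3 be odd, let 1 ≤ r < m, and let a_1(x), …, a_m(x) ∈ F_2[x]/(x^N − 1), each having exactly t nonzero coefficients with t even, with associated N×N circulant matrices A_1, …, A_m over F_2. Assume that for every r-element subset {i_1, …, i_r} ⊆ [m], gcd( â_{i_1}(x) · ∏_{j=1}^{r−1} ∏_{(c_1,…,c_j) ∈ F_2^j} ( â_{i_{j+1}}(x) − Σ_{k=1}^{j} c_k â_{i_k}(x) ), x^N − 1 ) = x − 1 in F_2[x], where the product is computed in F_2[x]/(x^N − 1) and â denotes the representative of degree < N. Then for every r-element subset {i_1, …, i_r} ⊆ [m], the r(N−1) × r(N−1) block matrix whose (s, l) block (s, l ∈ [r]) is Pu(A_{i_l}^{2^{s−1}}, 1) is invertible over F_2; that is, the block matrix H with blocks Pu(A_j^{2^{s−1}}, 1) for s ∈ [r], j ∈ [m] is the parity-check matrix of an MDS array code over F_2 with sub-packetization level N − 1. -/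
open Polynomial

/-- The polynomial `â₁ · ∏_{j=1}^{r-1} ∏_{(c₁,…,c_j) ∈ F₂^j} (â_{j+1} - ∑_{k≤j} c_k â_k)`
appearing in the gcd condition of the paper (specialized to `q = 2`). -/
noncomputable def gcdExpr (r : ℕ) (hr : 0 < r) (pa : Fin r → Polynomial (ZMod 2)) :
    Polynomial (ZMod 2) :=
  pa ⟨0, hr⟩ *
    ∏ j : Fin (r - 1), ∏ c : Fin ((j : ℕ) + 1) → ZMod 2,
      (pa ⟨(j : ℕ) + 1, by have := j.isLt; omega⟩ -
        ∑ k : Fin ((j : ℕ) + 1),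
          Polynomial.C (c k) * pa ⟨(k : ℕ), by have := j.isLt; have := k.isLt; omega⟩)

/-!
Let `v` be in the left kernel of the punctured block matrix and pad each block `v_s` with a zero
to `V_s ∈ F₂^N`. The vector `z_l = ∑_s V_s A_l^{2^s}` vanishes in its first `N - 1` coordinates,
and its coordinate sum vanishes because every `a_l` has even weight, so `z_l = 0`; in
`F₂[x]/(x^N - 1)` this says `∑_s V_s a_l^{2^s} = 0`. For an irreducible factor `p ≠ x - 1` of
`x^N - 1`, the gcd condition makes the images of `a_1, …, a_r` in `F₂[x]/(p)` linearly independent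
over `F₂`; the linearized polynomial `∑_s V_s Y^{2^s}` has degree `< 2^r` and vanishes on their
`2^r`-element span, so `p ∣ V_s`. As `N` is odd, `x^N - 1` is squarefree, hence
`x^N - 1 ∣ (x - 1) V_s`, and `deg V_s < N - 1` forces `V_s = 0`.
-/

section LinearizedPoly

variable {K : Type*} {r : ℕ}

noncomputable def linearizedPoly [Semiring K] (p : ℕ) (w : Fin r → K) : K[X] :=
  ∑ s : Fin r, C (w s) * X ^ p ^ (s : ℕ)

theorem coeff_linearizedPoly_pow [Semiring K] {p : ℕ} (hp : 1 < p) (w : Fin r → K) (s : Fin r) :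
    (linearizedPoly p w).coeff (p ^ (s : ℕ)) = w s := by
  simp [linearizedPoly, (Nat.pow_right_injective hp).eq_iff, Fin.val_inj]

theorem natDegree_linearizedPoly_lt [Semiring K] {p : ℕ} (hp : 1 < p) (w : Fin r → K) :
    (linearizedPoly p w).natDegree < p ^ r := by
  rcases r with _ | r
  · simp [linearizedPoly]
  refine (natDegree_sum_le_of_forall_le _ _ fun s _ => ?_).trans_lt
    (Nat.pow_lt_pow_right hp r.lt_succ_self)
  exact (natDegree_C_mul_X_pow_le _ _).trans
    (Nat.pow_le_pow_right (by omega) (Nat.lt_succ_iff.mp s.isLt))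

theorem eval_sum_smul_linearizedPoly [Field K] {p : ℕ} [Fact p.Prime] [Algebra (ZMod p) K]
    {ι : Type*} [Fintype ι] (w : Fin r → K) (c : ι → ZMod p) (β : ι → K) :
    (linearizedPoly p w).eval (∑ l, c l • β l) = ∑ l, c l • (linearizedPoly p w).eval (β l) := by
  have : CharP K p := charP_of_injective_algebraMap' (ZMod p) p
  simp only [linearizedPoly, eval_finsetSum, eval_mul, eval_C, eval_pow, eval_X,
    sum_pow_char_pow, _root_.smul_pow, ZMod.pow_card_pow, Finset.smul_sum, Finset.mul_sum,
    mul_smul_comm]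
  exact Finset.sum_comm

theorem LinearIndependent.eq_zero_of_forall_sum_mul_pow_pow_eq_zero [Field K] {p : ℕ} [Fact p.Prime]
    [Algebra (ZMod p) K] {β w : Fin r → K} (hβ : LinearIndependent (ZMod p) β)
    (h : ∀ l, ∑ s, w s * β l ^ p ^ (s : ℕ) = 0) : w = 0 := by
  have hL : linearizedPoly p w = 0 := by
    refine eq_zero_of_natDegree_lt_card_of_eval_eq_zero _ hβ.fintypeLinearCombination_injective
      (fun c => ?_) ?_
    · simp only [Fintype.linearCombination_apply, eval_sum_smul_linearizedPoly]
      refine Finset.sum_eq_zero fun l _ => ?_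
      simp [linearizedPoly, eval_finsetSum, h l]
    · simpa using natDegree_linearizedPoly_lt (Fact.out : p.Prime).one_lt w
  funext s
  rw [← coeff_linearizedPoly_pow (Fact.out : p.Prime).one_lt w s, hL, coeff_zero, Pi.zero_apply]

end LinearizedPoly

theorem linearIndependent_comp_of_map_gcdExpr_ne_zero {A : Type*} [CommRing A]
    [Algebra (ZMod 2) A] {r : ℕ} (hr : 0 < r) (pa : Fin r → (ZMod 2)[X])
    (f : (ZMod 2)[X] →ₐ[ZMod 2] A) (hf : f (gcdExpr r hr pa) ≠ 0) :
    LinearIndependent (ZMod 2) (f ∘ pa) := by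
  have map_ne_zero_of_dvd {q : (ZMod 2)[X]} (hq : q ∣ gcdExpr r hr pa) : f q ≠ 0 :=
    fun h0 => hf (zero_dvd_iff.mp (h0 ▸ map_dvd f hq))
  have hinitial : ∀ n (hn : n < r),
      LinearIndependent (ZMod 2) fun k : Fin (n + 1) => f (pa (Fin.castLE hn k)) := by
    intro n
    induction n with
    | zero =>
      intro hn
      show LinearIndependent (ZMod 2) fun k : Fin 1 => f (pa (Fin.castLE hn k))
      exact linearIndependent_unique_iff.mpr
        (map_ne_zero_of_dvd (q := pa ⟨0, hr⟩) (dvd_mul_right _ _))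
    | succ n ih =>
      intro hn
      rw [linearIndependent_finSucc']
      refine ⟨ih (by omega), fun hmem => ?_⟩
      obtain ⟨c, hc⟩ := (Submodule.mem_span_range_iff_exists_fun _).mp hmem
      have hdvd : pa ⟨n + 1, hn⟩ - ∑ k : Fin (n + 1), C (c k) * pa ⟨k, by omega⟩ ∣
          gcdExpr r hr pa := by
        refine dvd_mul_of_dvd_right (dvd_trans ?_
          (Finset.dvd_prod_of_mem _ (Finset.mem_univ (⟨n, by omega⟩ : Fin (r - 1))))) _
        exact Finset.dvd_prod_of_mem _ (Finset.mem_univ c)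
      apply map_ne_zero_of_dvd hdvd
      simp only [map_sub, map_sum, C_mul', map_smul]
      exact sub_eq_zero.mpr hc.symm
  have := hinitial (r - 1) (by omega)
  exact this.comp (Fin.cast (by omega)) (Fin.cast_injective _)

open UniqueFactorizationMonoid in
theorem Squarefree.dvd_of_forall_irreducible_dvd {R : Type*} [CommMonoidWithZero R]
    [Nontrivial R] [NormalizationMonoid R] [UniqueFactorizationMonoid R] {x y : R}
    (hx : Squarefree x) (h : ∀ p, Irreducible p → p ∣ x → p ∣ y) : x ∣ y := by
  rcases eq_or_ne y 0 with rfl | hy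
  · exact dvd_zero x
  refine (hx.isRadical.dvd_radical hx.ne_zero).trans
    ((radical_dvd_iff_primeFactors_subset hy).mpr fun p hp => ?_)
  rw [mem_primeFactors, mem_normalizedFactors_iff' hx.ne_zero] at hp
  rw [mem_primeFactors, mem_normalizedFactors_iff' hy]
  exact ⟨hp.1, hp.2.1, h p hp.1 hp.2.2⟩

theorem eq_zero_of_forall_irreducible_dvd_X_pow_sub_one {K : Type*} [Field K] {N : ℕ}
    (hN : (N : K) ≠ 0) {V : K[X]} (hdeg : V.degree < (N - 1 : ℕ))
    (h : ∀ p, Irreducible p → p ∣ X ^ N - 1 → ¬ p ∣ X - 1 → p ∣ V) : V = 0 := by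
  classical
  have hsq : Squarefree (X ^ N - 1 : K[X]) := by
    simpa using (separable_X_pow_sub_C (1 : K) hN one_ne_zero).squarefree
  have hdvd : X ^ N - 1 ∣ (X - 1) * V := hsq.dvd_of_forall_irreducible_dvd fun p hp hpN => by
    by_cases hpX : p ∣ X - 1
    · exact dvd_mul_of_dvd_left hpX V
    · exact dvd_mul_of_dvd_right (h p hp hpN hpX) _
  by_contra hV
  have hXV : (X - 1) * V ≠ 0 := mul_ne_zero (X_sub_C_ne_zero 1) hV
  have := natDegree_le_of_dvd hdvd hXV
  rw [← C_1, natDegree_mul (X_sub_C_ne_zero 1) hV, natDegree_X_sub_C,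
    natDegree_X_pow_sub_C] at this
  have := (natDegree_lt_iff_degree_lt hV).mpr hdeg
  omega

theorem eq_zero_of_X_pow_sub_one_dvd_sum_mul_pow_two_pow {N r : ℕ} (hN : Odd N) (hr : 0 < r)
    {pa W : Fin r → (ZMod 2)[X]}
    (hgcd : EuclideanDomain.gcd (gcdExpr r hr pa) (X ^ N - 1) = X - 1)
    (hdeg : ∀ s, (W s).degree < (N - 1 : ℕ))
    (hdvd : ∀ l, X ^ N - 1 ∣ ∑ s, W s * pa l ^ 2 ^ (s : ℕ)) : W = 0 := by
  funext s
  have hN2 : (N : ZMod 2) ≠ 0 := by simp [ZMod.natCast_eq_one_iff_odd.mpr hN]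
  refine eq_zero_of_forall_irreducible_dvd_X_pow_sub_one hN2 (hdeg s) fun q hq hqN hqX => ?_
  have : Fact (Irreducible q) := ⟨hq⟩
  have hli := linearIndependent_comp_of_map_gcdExpr_ne_zero hr pa (AdjoinRoot.mkₐ q)
    fun h0 => hqX (hgcd ▸ EuclideanDomain.dvd_gcd (AdjoinRoot.mk_eq_zero.mp h0) hqN)
  have hW := hli.eq_zero_of_forall_sum_mul_pow_pow_eq_zero (w := AdjoinRoot.mk q ∘ W) fun l => by
    simpa using AdjoinRoot.mk_eq_zero.mpr (hqN.trans (hdvd l))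
  exact AdjoinRoot.mk_eq_zero.mp (congrFun hW s)

theorem Fintype.sum_extend_zero {ι κ M S : Type*} [Fintype ι] [Fintype κ] [Zero M]
    [AddCommMonoid S] {e : ι → κ} (he : e.Injective) (v : ι → M) (g : κ → M → S)
    (hg : ∀ b, g b 0 = 0) : ∑ b, g b (Function.extend e v 0 b) = ∑ i, g (e i) (v i) := by
  refine (Fintype.sum_of_injective e he _ _ (fun b hb => ?_) fun i => by rw [he.extend_apply]).symm
  rw [Function.extend_apply' _ _ _ (by simpa using hb), Pi.zero_apply, hg]

section Circulant

open Matrix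

variable {F A : Type*} {N : ℕ}

theorem coeff_repPoly [Semiring F] (v : Fin N → F) (i : Fin N) :
    (repPoly N v).coeff i = v i := by
  simp [repPoly, finsetSum_coeff, Fin.val_inj]

theorem repPoly_extend_castLE [Semiring F] {n : ℕ} (h : n ≤ N) (v : Fin n → F) :
    repPoly N (Function.extend (Fin.castLE h) v 0) = repPoly n v :=
  Fintype.sum_extend_zero (Fin.castLE_injective h) v (fun b x => C x * X ^ (b : ℕ)) (by simp)

theorem aeval_repPoly [CommSemiring F] [Semiring A] [Algebra F A] (ρ : A) (v : Fin N → F) :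
    aeval ρ (repPoly N v) = ∑ a, algebraMap F A (v a) * ρ ^ (a : ℕ) := by
  simp [repPoly, aeval_def]

theorem repPoly_sum [CommSemiring F] {ι : Type*} (s : Finset ι) (w : ι → Fin N → F) :
    repPoly N (∑ i ∈ s, w i) = ∑ i ∈ s, repPoly N (w i) := by
  simp only [repPoly, Finset.sum_apply, map_sum, Finset.sum_mul]
  exact Finset.sum_comm

theorem aeval_repPoly_vecMul_circMat [CommSemiring F] [CommSemiring A] [Algebra F A] [NeZero N]
    {ρ : A} (hρ : ρ ^ N = 1) (v cf : Fin N → F) :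
    aeval ρ (repPoly N (v ᵥ* circMat N cf)) = aeval ρ (repPoly N v) * aeval ρ (repPoly N cf) := by
  have hpow (a u : Fin N) : ρ ^ ((u + a : Fin N) : ℕ) = ρ ^ (a : ℕ) * ρ ^ (u : ℕ) := by
    rw [Fin.val_add, ← pow_eq_pow_mod _ hρ, pow_add, mul_comm]
  simp only [aeval_repPoly, vecMul, dotProduct, circMat, of_apply, map_sum, map_mul]
  rw [Finset.sum_mul_sum]
  simp only [Finset.sum_mul]
  conv_lhs => rw [Finset.sum_comm]
  refine Finset.sum_congr rfl fun a _ => ?_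
  refine (Fintype.sum_equiv (Equiv.addRight a) _ _ fun u => ?_).symm
  simp only [Equiv.coe_addRight, add_sub_cancel_right, hpow]
  ring

theorem aeval_repPoly_vecMul_circMat_pow [CommSemiring F] [CommSemiring A] [Algebra F A]
    [NeZero N] {ρ : A} (hρ : ρ ^ N = 1) (v cf : Fin N → F) (k : ℕ) :
    aeval ρ (repPoly N (v ᵥ* circMat N cf ^ k)) =
      aeval ρ (repPoly N v) * aeval ρ (repPoly N cf) ^ k := by
  induction k generalizing v with
  | zero => simp
  | succ k ih =>
    rw [pow_succ, ← vecMul_vecMul, aeval_repPoly_vecMul_circMat hρ, ih, pow_succ, mul_assoc]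

theorem aeval_repPoly_sum_vecMul_circMat_pow [CommSemiring F] [CommSemiring A] [Algebra F A]
    [NeZero N] {ρ : A} (hρ : ρ ^ N = 1) {ι : Type*} [Fintype ι] (V : ι → Fin N → F)
    (cf : Fin N → F) (k : ι → ℕ) :
    aeval ρ (repPoly N (∑ s, V s ᵥ* circMat N cf ^ k s)) =
      ∑ s, aeval ρ (repPoly N (V s)) * aeval ρ (repPoly N cf) ^ k s := by
  simp only [repPoly_sum, map_sum, aeval_repPoly_vecMul_circMat_pow hρ]

theorem sum_apply_sum_vecMul_circMat_pow_eq_zero [CommSemiring F] [NeZero N] {ι : Type*}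
    [Fintype ι] (V : ι → Fin N → F) {cf : Fin N → F} (hcf : ∑ u, cf u = 0) {k : ι → ℕ}
    (hk : ∀ s, k s ≠ 0) : ∑ b, (∑ s, V s ᵥ* circMat N cf ^ k s) b = 0 := by
  have h := aeval_repPoly_sum_vecMul_circMat_pow (one_pow (M := F) N) V cf k
  simpa [aeval_repPoly, hcf, zero_pow (hk _)] using h

theorem X_pow_sub_one_dvd_of_sum_vecMul_circMat_pow_eq_zero [CommRing F] [NeZero N]
    {ι : Type*} [Fintype ι] (V : ι → Fin N → F) (cf : Fin N → F) (k : ι → ℕ)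
    (h : ∑ s, V s ᵥ* circMat N cf ^ k s = 0) :
    X ^ N - 1 ∣ ∑ s, repPoly N (V s) * repPoly N cf ^ k s := by
  have hroot : AdjoinRoot.root (X ^ N - 1 : F[X]) ^ N = 1 := by
    rw [← sub_eq_zero, ← AdjoinRoot.mk_X, ← map_pow, ← map_one (AdjoinRoot.mk _), ← map_sub,
      AdjoinRoot.mk_self]
  have := aeval_repPoly_sum_vecMul_circMat_pow hroot V cf k
  simp only [AdjoinRoot.aeval_eq, h, ← map_pow, ← map_mul, ← map_sum] at this
  exact AdjoinRoot.mk_eq_zero.mp (this.symm.trans (by simp [repPoly]))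

end Circulant

theorem ZMod.sum_eq_zero_of_even_card_ne_zero {ι : Type*} [Fintype ι] (f : ι → ZMod 2)
    (h : Even (Finset.univ.filter fun i => f i ≠ 0).card) : ∑ i, f i = 0 := by
  have hone (b : ZMod 2) (hb : b ≠ 0) : b = 1 := by revert b; decide
  rw [← Finset.sum_filter_ne_zero,
    Finset.sum_congr rfl fun i hi => hone _ (Finset.mem_filter.mp hi).2, Finset.sum_const,
    nsmul_one, ZMod.natCast_eq_zero_iff_even]
  exact h

theorem Fin.eq_zero_of_sum_eq_zero_of_castLE_eq_zero {M : Type*} [AddCommMonoid M] {N : ℕ}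
    {z : Fin N → M} (hsum : ∑ b, z b = 0)
    (h : ∀ j : Fin (N - 1), z (Fin.castLE (Nat.sub_le N 1) j) = 0) : z = 0 := by
  have hlow (b : Fin N) (hb : (b : ℕ) < N - 1) : z b = 0 := h ⟨b, hb⟩
  funext b
  by_cases hb : (b : ℕ) < N - 1
  · exact hlow b hb
  rw [Pi.zero_apply, ← hsum, Finset.sum_eq_single b (fun b' _ hb' => hlow b' ?_) (by simp)]
  have := Fin.val_ne_of_ne hb'
  omega

open Matrix in
theorem vecMul_of_blocks_apply {F ι κ α β : Type*} [NonUnitalNonAssocSemiring F] [Fintype ι]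
    [Fintype α] [Fintype β] {e : α → β} (he : e.Injective) (B : ι → κ → Matrix β β F)
    (v : ι × α → F) (l : κ) (j : α) :
    (v ᵥ* Matrix.of fun (p : ι × α) (c : κ × α) => B p.1 c.1 (e p.2) (e c.2)) (l, j) =
      (∑ s, Function.extend e (fun i => v (s, i)) 0 ᵥ* B s l) (e j) := by
  simp only [vecMul, dotProduct, Finset.sum_apply, Fintype.sum_prod_type, of_apply]
  exact Finset.sum_congr rfl fun s _ =>
    (Fintype.sum_extend_zero he _ (fun b x => x * B s l b (e j)) (by simp)).symm

theorem punctured_cm_moore_mds_general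
    (N : ℕ) (hNodd : Odd N)
    (r m : ℕ) (hr : 1 ≤ r)
    (cf : Fin m → Fin N → ZMod 2)
    (t : ℕ) (hteven : Even t)
    (hwt : ∀ i : Fin m, (Finset.univ.filter fun u : Fin N => cf i u ≠ 0).card = t)
    (hgcd : ∀ σ : Fin r → Fin m, Function.Injective σ →
      EuclideanDomain.gcd (gcdExpr r hr fun l => repPoly N (cf (σ l)))
          (Polynomial.X ^ N - 1)
        = Polynomial.X - 1) :
    ∀ σ : Fin r → Fin m, Function.Injective σ →
      (Matrix.of fun p c : Fin r × Fin (N - 1) =>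
        (circMat N (cf (σ c.1)) ^ 2 ^ (p.1 : ℕ))
          (Fin.castLE (Nat.sub_le N 1) p.2) (Fin.castLE (Nat.sub_le N 1) c.2)).det ≠ 0 := by
  intro σ hσ hdet
  have : NeZero N := ⟨hNodd.pos.ne'⟩
  obtain ⟨v, hv0, hv⟩ := Matrix.exists_vecMul_eq_zero_iff.mpr hdet
  set V : Fin r → Fin N → ZMod 2 := fun s =>
    Function.extend (Fin.castLE (Nat.sub_le N 1)) (fun i => v (s, i)) 0
  have hz (l : Fin r) : ∑ s, Matrix.vecMul (V s) (circMat N (cf (σ l)) ^ 2 ^ (s : ℕ)) = 0 := by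
    refine Fin.eq_zero_of_sum_eq_zero_of_castLE_eq_zero ?_ fun j => ?_
    · exact sum_apply_sum_vecMul_circMat_pow_eq_zero V
        (ZMod.sum_eq_zero_of_even_card_ne_zero _ (hwt _ ▸ hteven)) fun _ => by positivity
    · have := vecMul_of_blocks_apply (Fin.castLE_injective (Nat.sub_le N 1))
        (fun (s : Fin r) l => circMat N (cf (σ l)) ^ 2 ^ (s : ℕ)) v l j
      rw [hv] at this
      exact this.symm
  have hW : (fun s => repPoly (N - 1) fun i => v (s, i)) = 0 := by
    refine eq_zero_of_X_pow_sub_one_dvd_sum_mul_pow_two_pow hNodd hr (hgcd σ hσ)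
      (fun s => degree_sum_fin_lt _) fun l => ?_
    have := X_pow_sub_one_dvd_of_sum_vecMul_circMat_pow_eq_zero V _ _ (hz l)
    simpa only [V, repPoly_extend_castLE] using this
  refine hv0 (funext fun q => ?_)
  have := congrArg (coeff · q.2) (congrFun hW q.1)
  simpa only [coeff_repPoly, Pi.zero_apply, coeff_zero] using this

/-- **Binary block MDS array codes from punctured CM(t)s with Moore structure.**
Let `N ≥ 3` be odd, `1 ≤ r < m`, and let `a 1, …, a m ∈ F₂[x]/(x^N - 1)` each have
exactly `t` nonzero coefficients with `t` even, with circulant matrices `A 1, …, A m`.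
If for every `r`-element subset `{i 1, …, i r} ⊆ [m]` the gcd condition
`gcd(â_{i 1} · ∏_j ∏_c (â_{i (j+1)} - ∑ c_k â_{i k}), x^N - 1) = x - 1` holds, then
for every `r`-element subset the `r(N-1) × r(N-1)` block matrix with `(s, l)` block
`Pu(A_{i l} ^ (2 ^ (s-1)), 1)` is invertible over `F₂`; i.e. the block matrix `H` with
blocks `Pu(A j ^ (2 ^ (s-1)), 1)` is the parity-check matrix of an MDS array code over
`F₂` with sub-packetization level `N - 1`. -/
theorem punctured_cm_moore_mds
    (N : ℕ) (hN : 3 ≤ N) (hNodd : Odd N)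
    (r m : ℕ) (hr : 1 ≤ r) (hrm : r < m)
    (cf : Fin m → Fin N → ZMod 2)
    (t : ℕ) (hteven : Even t)
    (hwt : ∀ i : Fin m, (Finset.univ.filter fun u : Fin N => cf i u ≠ 0).card = t)
    (hgcd : ∀ σ : Fin r → Fin m, Function.Injective σ →
      EuclideanDomain.gcd (gcdExpr r hr fun l => repPoly N (cf (σ l)))
          (Polynomial.X ^ N - 1)
        = Polynomial.X - 1) :
    ∀ σ : Fin r → Fin m, Function.Injective σ →
      (Matrix.of fun p c : Fin r × Fin (N - 1) =>
        (circMat N (cf (σ c.1)) ^ 2 ^ (p.1 : ℕ))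
          (Fin.castLE (Nat.sub_le N 1) p.2) (Fin.castLE (Nat.sub_le N 1) c.2)).det ≠ 0 :=
  punctured_cm_moore_mds_general N hNodd r m hr cf t hteven hwt hgcd
end
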